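/- arXiv:0805.3432 — 2 statements merged into one kernel-verified Lean document; each statement's English description precedes it below -/
import Mathlib

section
/- Let H be a bialgebra, A a bialgebra in the left-left Yetter-Drinfeld category over H, B a bialgebra in the right-right Yetter-Drinfeld category over H, with the trivial-pairing condition b² ▷ a² ⊗ b¹ ◁ a¹ = a ⊗ b. Define D = A ⊗ B with the tensor product algebra and coalgebra structures, left H-action h·(a ⊗ b) = (h ▷ a) ⊗ b, right H-action (a ⊗ b)·h = a ⊗ (b ◁ h), left H-coaction (a ⊗ b) ↦ a¹ ⊗ (a² ⊗ b), and right H-coaction (a ⊗ b) ↦ (a ⊗ b¹) ⊗ b². Then (H, D) is an L-R-admissible pair. -/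
open TensorProduct
noncomputable section
namespace LRPaper
variable (k : Type*) [CommRing k]

def tt (A B C E : Type*) [AddCommGroup A] [Module k A] [AddCommGroup B] [Module k B]
    [AddCommGroup C] [Module k C] [AddCommGroup E] [Module k E] :
    (A ⊗[k] B) ⊗[k] (C ⊗[k] E) →ₗ[k] (A ⊗[k] C) ⊗[k] (B ⊗[k] E) :=
  (TensorProduct.tensorTensorTensorComm k A B C E).toLinearMap

def asl (A B C : Type*) [AddCommGroup A] [Module k A] [AddCommGroup B] [Module k B]
    [AddCommGroup C] [Module k C] :
    (A ⊗[k] B) ⊗[k] C →ₗ[k] A ⊗[k] (B ⊗[k] C) :=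
  (TensorProduct.assoc k A B C).toLinearMap

def asr (A B C : Type*) [AddCommGroup A] [Module k A] [AddCommGroup B] [Module k B]
    [AddCommGroup C] [Module k C] :
    A ⊗[k] (B ⊗[k] C) →ₗ[k] (A ⊗[k] B) ⊗[k] C :=
  (TensorProduct.assoc k A B C).symm.toLinearMap

def sw (A B : Type*) [AddCommGroup A] [Module k A] [AddCommGroup B] [Module k B] :
    A ⊗[k] B →ₗ[k] B ⊗[k] A :=
  (TensorProduct.comm k A B).toLinearMap


/-- `middle f` applies `f` to the two middle tensor factors. -/
def middle {A B C E B' C' : Type*} [AddCommGroup A] [Module k A] [AddCommGroup B] [Module k B]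
    [AddCommGroup C] [Module k C] [AddCommGroup E] [Module k E]
    [AddCommGroup B'] [Module k B'] [AddCommGroup C'] [Module k C']
    (f : B ⊗[k] C →ₗ[k] B' ⊗[k] C') :
    (A ⊗[k] B) ⊗[k] (C ⊗[k] E) →ₗ[k] (A ⊗[k] B') ⊗[k] (C' ⊗[k] E) :=
  asl k (A ⊗[k] B') C' E
    ∘ₗ TensorProduct.map
        (asr k A B' C' ∘ₗ TensorProduct.map LinearMap.id f ∘ₗ asl k A B C) LinearMap.id
    ∘ₗ asr k (A ⊗[k] B) C E

section Conditions
variable (H : Type*) [Ring H] [Bialgebra k H]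
variable {M N : Type*} [AddCommGroup M] [Module k M] [AddCommGroup N] [Module k N]

/-- counit of `H` -/
def εH : H →ₗ[k] k := Coalgebra.counit
/-- comultiplication of `H` -/
def δH : H →ₗ[k] H ⊗[k] H := Coalgebra.comul
/-- multiplication of `H` -/
def μH : H ⊗[k] H →ₗ[k] H := LinearMap.mul' k H

def IsLeftModule (aL : H ⊗[k] M →ₗ[k] M) : Prop :=
  (∀ m : M, aL (1 ⊗ₜ m) = m) ∧
  ∀ (h h' : H) (m : M), aL ((h * h') ⊗ₜ m) = aL (h ⊗ₜ aL (h' ⊗ₜ m))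

def IsRightModule (aR : M ⊗[k] H →ₗ[k] M) : Prop :=
  (∀ m : M, aR (m ⊗ₜ 1) = m) ∧
  ∀ (m : M) (h h' : H), aR (m ⊗ₜ (h * h')) = aR (aR (m ⊗ₜ h) ⊗ₜ h')

def IsBimodule (aL : H ⊗[k] M →ₗ[k] M) (aR : M ⊗[k] H →ₗ[k] M) : Prop :=
  IsLeftModule k H aL ∧ IsRightModule k H aR ∧
  ∀ (h : H) (m : M) (h' : H), aR (aL (h ⊗ₜ m) ⊗ₜ h') = aL (h ⊗ₜ aR (m ⊗ₜ h'))

def IsLeftComodule (cL : M →ₗ[k] H ⊗[k] M) : Prop :=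
  (∀ m : M, TensorProduct.lid k M (TensorProduct.map (εH k H) LinearMap.id (cL m)) = m) ∧
  ∀ m : M, TensorProduct.map LinearMap.id cL (cL m)
    = TensorProduct.assoc k H H M (TensorProduct.map (δH k H) LinearMap.id (cL m))

def IsRightComodule (cR : M →ₗ[k] M ⊗[k] H) : Prop :=
  (∀ m : M, TensorProduct.rid k M (TensorProduct.map LinearMap.id (εH k H) (cR m)) = m) ∧
  ∀ m : M, TensorProduct.map cR LinearMap.id (cR m)
    = (TensorProduct.assoc k M H H).symm (TensorProduct.map LinearMap.id (δH k H) (cR m))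

def IsBicomodule (cL : M →ₗ[k] H ⊗[k] M) (cR : M →ₗ[k] M ⊗[k] H) : Prop :=
  IsLeftComodule k H cL ∧ IsRightComodule k H cR ∧
  ∀ m : M, TensorProduct.map LinearMap.id cR (cL m)
    = TensorProduct.assoc k H M H (TensorProduct.map cL LinearMap.id (cR m))

/-- `(h₁⊗h₂)⊗m ↦ (h₁·m)⁽⁻¹⁾h₂ ⊗ (h₁·m)⁽⁰⁾` -/
def ydlL (aL : H ⊗[k] M →ₗ[k] M) (cL : M →ₗ[k] H ⊗[k] M) :
    (H ⊗[k] H) ⊗[k] M →ₗ[k] H ⊗[k] M :=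
  TensorProduct.map (μH k H ∘ₗ sw k H H) LinearMap.id
    ∘ₗ asr k H H M
    ∘ₗ TensorProduct.map LinearMap.id (cL ∘ₗ aL)
    ∘ₗ asl k H H M
    ∘ₗ TensorProduct.map (sw k H H) LinearMap.id

/-- `(h₁⊗h₂)⊗m ↦ h₁m⁽⁻¹⁾ ⊗ h₂·m⁽⁰⁾` -/
def ydlR (aL : H ⊗[k] M →ₗ[k] M) (cL : M →ₗ[k] H ⊗[k] M) :
    (H ⊗[k] H) ⊗[k] M →ₗ[k] H ⊗[k] M :=
  TensorProduct.map (μH k H) aL ∘ₗ tt k H H H M ∘ₗ TensorProduct.map LinearMap.id cL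

/-- left-left Yetter–Drinfeld compatibility -/
def CondYDl (aL : H ⊗[k] M →ₗ[k] M) (cL : M →ₗ[k] H ⊗[k] M) : Prop :=
  ∀ (h : H) (m : M),
    ydlL k H aL cL (δH k H h ⊗ₜ m) = ydlR k H aL cL (δH k H h ⊗ₜ m)

/-- left-right Long compatibility -/
def CondLongLR (aL : H ⊗[k] M →ₗ[k] M) (cR : M →ₗ[k] M ⊗[k] H) : Prop :=
  ∀ (h : H) (m : M),
    cR (aL (h ⊗ₜ m))
      = TensorProduct.map aL LinearMap.id ((TensorProduct.assoc k H M H).symm (h ⊗ₜ cR m))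

/-- `m⊗(h₁⊗h₂) ↦ (m·h₂)⁽⁰⁾ ⊗ h₁(m·h₂)⁽¹⁾` -/
def ydrL (aR : M ⊗[k] H →ₗ[k] M) (cR : M →ₗ[k] M ⊗[k] H) :
    M ⊗[k] (H ⊗[k] H) →ₗ[k] M ⊗[k] H :=
  TensorProduct.map LinearMap.id (μH k H ∘ₗ sw k H H)
    ∘ₗ asl k M H H
    ∘ₗ TensorProduct.map (cR ∘ₗ aR) LinearMap.id
    ∘ₗ asr k M H H
    ∘ₗ TensorProduct.map LinearMap.id (sw k H H)

/-- `m⊗(h₁⊗h₂) ↦ m⁽⁰⁾·h₁ ⊗ m⁽¹⁾h₂` -/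
def ydrR (aR : M ⊗[k] H →ₗ[k] M) (cR : M →ₗ[k] M ⊗[k] H) :
    M ⊗[k] (H ⊗[k] H) →ₗ[k] M ⊗[k] H :=
  TensorProduct.map aR (μH k H) ∘ₗ tt k M H H H ∘ₗ TensorProduct.map cR LinearMap.id

/-- right-right Yetter–Drinfeld compatibility -/
def CondYDr (aR : M ⊗[k] H →ₗ[k] M) (cR : M →ₗ[k] M ⊗[k] H) : Prop :=
  ∀ (h : H) (m : M),
    ydrL k H aR cR (m ⊗ₜ δH k H h) = ydrR k H aR cR (m ⊗ₜ δH k H h)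

/-- right-left Long compatibility -/
def CondLongRL (aR : M ⊗[k] H →ₗ[k] M) (cL : M →ₗ[k] H ⊗[k] M) : Prop :=
  ∀ (m : M) (h : H),
    cL (aR (m ⊗ₜ h))
      = TensorProduct.map LinearMap.id aR (TensorProduct.assoc k H M H (cL m ⊗ₜ h))

/-- objects of the category LR(H) -/
def IsLRObj (aL : H ⊗[k] M →ₗ[k] M) (aR : M ⊗[k] H →ₗ[k] M)
    (cL : M →ₗ[k] H ⊗[k] M) (cR : M →ₗ[k] M ⊗[k] H) : Prop :=
  IsBimodule k H aL aR ∧ IsBicomodule k H cL cR ∧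
  CondYDl k H aL cL ∧ CondLongLR k H aL cR ∧ CondYDr k H aR cR ∧ CondLongRL k H aR cL


variable {P : Type*} [AddCommGroup P] [Module k P]

/-- diagonal left action on `M ⊗ N` -/
def tActL (aLM : H ⊗[k] M →ₗ[k] M) (aLN : H ⊗[k] N →ₗ[k] N) :
    H ⊗[k] (M ⊗[k] N) →ₗ[k] M ⊗[k] N :=
  TensorProduct.map aLM aLN ∘ₗ tt k H H M N ∘ₗ TensorProduct.map (δH k H) LinearMap.id

/-- diagonal right action on `M ⊗ N` -/
def tActR (aRM : M ⊗[k] H →ₗ[k] M) (aRN : N ⊗[k] H →ₗ[k] N) :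
    (M ⊗[k] N) ⊗[k] H →ₗ[k] M ⊗[k] N :=
  TensorProduct.map aRM aRN ∘ₗ tt k M N H H ∘ₗ TensorProduct.map LinearMap.id (δH k H)

/-- codiagonal left coaction on `M ⊗ N` -/
def tCoactL (cLM : M →ₗ[k] H ⊗[k] M) (cLN : N →ₗ[k] H ⊗[k] N) :
    M ⊗[k] N →ₗ[k] H ⊗[k] (M ⊗[k] N) :=
  TensorProduct.map (μH k H) LinearMap.id ∘ₗ tt k H M H N ∘ₗ TensorProduct.map cLM cLN

/-- codiagonal right coaction on `M ⊗ N` -/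
def tCoactR (cRM : M →ₗ[k] M ⊗[k] H) (cRN : N →ₗ[k] N ⊗[k] H) :
    M ⊗[k] N →ₗ[k] (M ⊗[k] N) ⊗[k] H :=
  TensorProduct.map LinearMap.id (μH k H) ∘ₗ tt k M H N H ∘ₗ TensorProduct.map cRM cRN

/-- the (pre)braiding `m ⊗ n ↦ m⁽⁻¹⁾·n⁽⁰⁾ ⊗ m⁽⁰⁾·n⁽¹⁾` of LR(H) -/
def braid (cLM : M →ₗ[k] H ⊗[k] M) (aRM : M ⊗[k] H →ₗ[k] M)
    (aLN : H ⊗[k] N →ₗ[k] N) (cRN : N →ₗ[k] N ⊗[k] H) :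
    M ⊗[k] N →ₗ[k] N ⊗[k] M :=
  TensorProduct.map aLN aRM ∘ₗ tt k H M N H ∘ₗ TensorProduct.map cLM cRN

/-- coalgebra axioms for explicit comultiplication and counit -/
def IsCoalg (Δd : M →ₗ[k] M ⊗[k] M) (εd : M →ₗ[k] k) : Prop :=
  (∀ m : M, TensorProduct.lid k M (TensorProduct.map εd LinearMap.id (Δd m)) = m) ∧
  (∀ m : M, TensorProduct.rid k M (TensorProduct.map LinearMap.id εd (Δd m)) = m) ∧
  ∀ m : M, TensorProduct.assoc k M M M (TensorProduct.map Δd LinearMap.id (Δd m))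
    = TensorProduct.map LinearMap.id Δd (Δd m)

/-- `M` is a left `H`-comodule coalgebra -/
def IsLComodCoalg (cL : M →ₗ[k] H ⊗[k] M) (Δd : M →ₗ[k] M ⊗[k] M) (εd : M →ₗ[k] k) : Prop :=
  (∀ m : M,
    TensorProduct.map (μH k H) LinearMap.id (tt k H M H M (TensorProduct.map cL cL (Δd m)))
      = TensorProduct.map LinearMap.id Δd (cL m)) ∧
  ∀ m : M, TensorProduct.rid k H (TensorProduct.map LinearMap.id εd (cL m)) = εd m • (1 : H)

/-- `M` is a right `H`-comodule coalgebra -/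
def IsRComodCoalg (cR : M →ₗ[k] M ⊗[k] H) (Δd : M →ₗ[k] M ⊗[k] M) (εd : M →ₗ[k] k) : Prop :=
  (∀ m : M,
    TensorProduct.map LinearMap.id (μH k H) (tt k M H M H (TensorProduct.map cR cR (Δd m)))
      = TensorProduct.map Δd LinearMap.id (cR m)) ∧
  ∀ m : M, TensorProduct.lid k H (TensorProduct.map εd LinearMap.id (cR m)) = εd m • (1 : H)

/-- morphisms of LR(H) -/
def IsLRHom {M' : Type*} [AddCommGroup M'] [Module k M']
    (aLM : H ⊗[k] M →ₗ[k] M) (aRM : M ⊗[k] H →ₗ[k] M)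
    (cLM : M →ₗ[k] H ⊗[k] M) (cRM : M →ₗ[k] M ⊗[k] H)
    (aLM' : H ⊗[k] M' →ₗ[k] M') (aRM' : M' ⊗[k] H →ₗ[k] M')
    (cLM' : M' →ₗ[k] H ⊗[k] M') (cRM' : M' →ₗ[k] M' ⊗[k] H)
    (f : M →ₗ[k] M') : Prop :=
  (∀ (h : H) (m : M), f (aLM (h ⊗ₜ m)) = aLM' (h ⊗ₜ f m)) ∧
  (∀ (m : M) (h : H), f (aRM (m ⊗ₜ h)) = aRM' (f m ⊗ₜ h)) ∧
  (∀ m : M, cLM' (f m) = TensorProduct.map LinearMap.id f (cLM m)) ∧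
  (∀ m : M, cRM' (f m) = TensorProduct.map f LinearMap.id (cRM m))


end Conditions

section AlgebraConditions
variable (H : Type*) [Ring H] [Bialgebra k H]
variable {D : Type*} [Ring D] [Algebra k D]

/-- multiplication of `D` -/
def μD : D ⊗[k] D →ₗ[k] D := LinearMap.mul' k D

/-- `D` is a left `H`-module algebra -/
def IsLeftModuleAlgebra (aL : H ⊗[k] D →ₗ[k] D) : Prop :=
  (∀ h : H, aL (h ⊗ₜ (1 : D)) = εH k H h • (1 : D)) ∧
  ∀ (h : H) (c d : D),
    aL (h ⊗ₜ (c * d))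
      = μD k (TensorProduct.map aL aL (tt k H H D D (δH k H h ⊗ₜ (c ⊗ₜ d))))

/-- `D` is a right `H`-module algebra -/
def IsRightModuleAlgebra (aR : D ⊗[k] H →ₗ[k] D) : Prop :=
  (∀ h : H, aR ((1 : D) ⊗ₜ h) = εH k H h • (1 : D)) ∧
  ∀ (c d : D) (h : H),
    aR ((c * d) ⊗ₜ h)
      = μD k (TensorProduct.map aR aR (tt k D D H H ((c ⊗ₜ d) ⊗ₜ δH k H h)))

/-- `ε_D` is an algebra map -/
def CondCounitAlg (εd : D →ₗ[k] k) : Prop :=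
  εd 1 = 1 ∧ ∀ c d : D, εd (c * d) = εd c * εd d

/-- `ε_D(h·d) = ε(h)ε_D(d)` and `ε_D(d·h) = ε_D(d)ε(h)` -/
def CondCounitActs (aL : H ⊗[k] D →ₗ[k] D) (aR : D ⊗[k] H →ₗ[k] D) (εd : D →ₗ[k] k) : Prop :=
  ∀ (h : H) (d : D), εd (aL (h ⊗ₜ d)) = εH k H h * εd d ∧ εd (aR (d ⊗ₜ h)) = εd d * εH k H h

/-- unitality of the coactions and of the comultiplication of `D` -/
def CondUnits (cL : D →ₗ[k] H ⊗[k] D) (cR : D →ₗ[k] D ⊗[k] H) (Δd : D →ₗ[k] D ⊗[k] D) : Prop :=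
  cL 1 = 1 ⊗ₜ 1 ∧ cR 1 = 1 ⊗ₜ 1 ∧ Δd 1 = 1 ⊗ₜ 1

/-- both coactions of `D` are multiplicative -/
def CondCoactMul (cL : D →ₗ[k] H ⊗[k] D) (cR : D →ₗ[k] D ⊗[k] H) : Prop :=
  (∀ c d : D, cL (c * d)
      = TensorProduct.map (μH k H) (μD k) (tt k H D H D (cL c ⊗ₜ cL d))) ∧
  ∀ c d : D, cR (c * d)
      = TensorProduct.map (μD k) (μH k H) (tt k D H D H (cR c ⊗ₜ cR d))

/-- `Δ_D` is an `H`-bimodule map -/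
def CondComulAct (aL : H ⊗[k] D →ₗ[k] D) (aR : D ⊗[k] H →ₗ[k] D)
    (Δd : D →ₗ[k] D ⊗[k] D) : Prop :=
  (∀ (h : H) (d : D), Δd (aL (h ⊗ₜ d))
      = TensorProduct.map aL aL (tt k H H D D (δH k H h ⊗ₜ Δd d))) ∧
  ∀ (d : D) (h : H), Δd (aR (d ⊗ₜ h))
      = TensorProduct.map aR aR (tt k D D H H (Δd d ⊗ₜ δH k H h))

/-- `Δ_D(cd) = c₁(c₂⁽⁻¹⁾·d₁⁽⁰⁾) ⊗ (c₂⁽⁰⁾·d₁⁽¹⁾)d₂` -/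
def CondBraidMul (aL : H ⊗[k] D →ₗ[k] D) (aR : D ⊗[k] H →ₗ[k] D)
    (cL : D →ₗ[k] H ⊗[k] D) (cR : D →ₗ[k] D ⊗[k] H) (Δd : D →ₗ[k] D ⊗[k] D) : Prop :=
  ∀ c d : D, Δd (c * d)
    = TensorProduct.map (μD k) (μD k)
        (middle k (braid k H cL aR aL cR) (Δd c ⊗ₜ Δd d))

/-- `c⁽⁰⁾·d⁽⁻¹⁾ ⊗ c⁽¹⁾·d⁽⁰⁾ = c ⊗ d` -/
def Cond114 (aL : H ⊗[k] D →ₗ[k] D) (aR : D ⊗[k] H →ₗ[k] D)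
    (cL : D →ₗ[k] H ⊗[k] D) (cR : D →ₗ[k] D ⊗[k] H) : Prop :=
  ∀ c d : D, TensorProduct.map aR aL (tt k D H H D (cR c ⊗ₜ cL d)) = c ⊗ₜ d

/-- `(H, D)` is an L-R-admissible pair -/
def LRAdmissible (aL : H ⊗[k] D →ₗ[k] D) (aR : D ⊗[k] H →ₗ[k] D)
    (cL : D →ₗ[k] H ⊗[k] D) (cR : D →ₗ[k] D ⊗[k] H)
    (Δd : D →ₗ[k] D ⊗[k] D) (εd : D →ₗ[k] k) : Prop :=
  IsBimodule k H aL aR ∧ IsLeftModuleAlgebra k H aL ∧ IsRightModuleAlgebra k H aR ∧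
  IsBicomodule k H cL cR ∧ IsCoalg k Δd εd ∧
  IsLComodCoalg k H cL Δd εd ∧ IsRComodCoalg k H cR Δd εd ∧
  CondCounitAlg k εd ∧ CondCounitActs k H aL aR εd ∧ CondUnits k H cL cR Δd ∧
  CondCoactMul k H cL cR ∧ CondComulAct k H aL aR Δd ∧ CondBraidMul k H aL aR cL cR Δd ∧
  CondYDl k H aL cL ∧ CondLongLR k H aL cR ∧ CondYDr k H aR cR ∧ CondLongRL k H aR cL ∧
  Cond114 k H aL aR cL cR

/-- `Σ (d·h'₂) ⊗ h'₁` -/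
def Xel (aR : D ⊗[k] H →ₗ[k] D) (d : D) (h' : H) : D ⊗[k] H :=
  TensorProduct.map aR LinearMap.id
    ((TensorProduct.assoc k D H H).symm (d ⊗ₜ TensorProduct.comm k H H (δH k H h')))

/-- `Σ (h₁·d') ⊗ h₂` -/
def Yel (aL : H ⊗[k] D →ₗ[k] D) (h : H) (d' : D) : D ⊗[k] H :=
  TensorProduct.comm k H D
    (TensorProduct.map LinearMap.id aL
      (TensorProduct.assoc k H H D
        (TensorProduct.map (sw k H H) LinearMap.id (δH k H h ⊗ₜ d'))))

/-- the element `(d·h'₂)(h₁·d') ⊗ h₂h'₁` of the L-R-smash product -/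
def smashMulExpr (aL : H ⊗[k] D →ₗ[k] D) (aR : D ⊗[k] H →ₗ[k] D)
    (d : D) (h : H) (d' : D) (h' : H) : D ⊗[k] H :=
  TensorProduct.map (μD k) (μH k H ∘ₗ sw k H H)
    (tt k D H D H (Xel k H aR d h' ⊗ₜ Yel k H aL h d'))

end AlgebraConditions

section CoproductGeneric
variable (H : Type*) [Ring H] [Bialgebra k H]
variable {D : Type*} [AddCommGroup D] [Module k D]

/-- structure map of the L-R-smash coproduct:
`(d₁⊗d₂)⊗(h₁⊗h₂) ↦ (d₁⁽⁰⁾ ⊗ d₂⁽⁻¹⁾h₁) ⊗ (d₂⁽⁰⁾ ⊗ h₂d₁⁽¹⁾)` -/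
def Wmap (cL : D →ₗ[k] H ⊗[k] D) (cR : D →ₗ[k] D ⊗[k] H) :
    (D ⊗[k] D) ⊗[k] (H ⊗[k] H) →ₗ[k] (D ⊗[k] H) ⊗[k] (D ⊗[k] H) :=
  TensorProduct.map
      (TensorProduct.map LinearMap.id (μH k H) ∘ₗ asl k D H H)
      (TensorProduct.map LinearMap.id (μH k H ∘ₗ sw k H H) ∘ₗ asl k D H H
        ∘ₗ TensorProduct.map (sw k H D) LinearMap.id)
    ∘ₗ tt k (D ⊗[k] H) (H ⊗[k] D) H H
    ∘ₗ TensorProduct.map (tt k D H H D) LinearMap.id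
    ∘ₗ TensorProduct.map (TensorProduct.map cR cL) LinearMap.id

/-- counit of the L-R-smash coproduct -/
def smashCounit (εd : D →ₗ[k] k) : D ⊗[k] H →ₗ[k] k :=
  LinearMap.mul' k k ∘ₗ TensorProduct.map εd (εH k H)



end CoproductGeneric

/-- the trivial right action `d·h = ε(h)d` -/
def trivActR {D : Type*} [AddCommGroup D] [Module k D] (H : Type*) [Ring H] [Bialgebra k H] :
    D ⊗[k] H →ₗ[k] D :=
  (TensorProduct.rid k D).toLinearMap ∘ₗ TensorProduct.map LinearMap.id (εH k H)

/-- the trivial right coaction `d ↦ d ⊗ 1` -/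
def trivCoactR {D : Type*} [AddCommGroup D] [Module k D] (H : Type*) [Ring H] [Bialgebra k H] :
    D →ₗ[k] D ⊗[k] H :=
  TensorProduct.map LinearMap.id (Algebra.linearMap k H) ∘ₗ (TensorProduct.rid k D).symm.toLinearMap

/-- the trivial left action `h·d = ε(h)d` -/
def trivActL {D : Type*} [AddCommGroup D] [Module k D] (H : Type*) [Ring H] [Bialgebra k H] :
    H ⊗[k] D →ₗ[k] D :=
  (TensorProduct.lid k D).toLinearMap ∘ₗ TensorProduct.map (εH k H) LinearMap.id

/-- the trivial left coaction `d ↦ 1 ⊗ d` -/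
def trivCoactL {D : Type*} [AddCommGroup D] [Module k D] (H : Type*) [Ring H] [Bialgebra k H] :
    D →ₗ[k] H ⊗[k] D :=
  TensorProduct.map (Algebra.linearMap k H) LinearMap.id ∘ₗ (TensorProduct.lid k D).symm.toLinearMap

section DoubleBiproduct
variable (H : Type*) [Ring H] [Bialgebra k H]
variable (A B : Type*) [Ring A] [Algebra k A] [Ring B] [Algebra k B]

/-- braiding of the left-left Yetter-Drinfeld category: `x ⊗ y ↦ x⁽⁻¹⁾·y ⊗ x⁽⁰⁾` -/
def braidYDl (cA : A →ₗ[k] H ⊗[k] A) (aA : H ⊗[k] A →ₗ[k] A) :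
    A ⊗[k] A →ₗ[k] A ⊗[k] A :=
  sw k A A ∘ₗ TensorProduct.map LinearMap.id aA ∘ₗ asl k A H A
    ∘ₗ TensorProduct.map (sw k H A) LinearMap.id ∘ₗ TensorProduct.map cA LinearMap.id

/-- braiding of the right-right Yetter-Drinfeld category: `x ⊗ y ↦ y⁽⁰⁾ ⊗ x·y⁽¹⁾` -/
def braidYDr (cB : B →ₗ[k] B ⊗[k] H) (aB : B ⊗[k] H →ₗ[k] B) :
    B ⊗[k] B →ₗ[k] B ⊗[k] B :=
  TensorProduct.map LinearMap.id aB ∘ₗ asl k B B H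
    ∘ₗ TensorProduct.map (sw k B B) LinearMap.id ∘ₗ asr k B B H
    ∘ₗ TensorProduct.map LinearMap.id cB

/-- `A` is a bialgebra in the left-left Yetter-Drinfeld category over `H` -/
def YDlBialgebra (aA : H ⊗[k] A →ₗ[k] A) (cA : A →ₗ[k] H ⊗[k] A)
    (ΔA : A →ₗ[k] A ⊗[k] A) (εA : A →ₗ[k] k) : Prop :=
  IsLeftModule k H aA ∧ IsLeftComodule k H cA ∧ CondYDl k H aA cA ∧
  IsLeftModuleAlgebra k H aA ∧
  (∀ a a' : A, cA (a * a')
      = TensorProduct.map (μH k H) (μD k) (tt k H A H A (cA a ⊗ₜ cA a'))) ∧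
  cA 1 = 1 ⊗ₜ 1 ∧ IsCoalg k ΔA εA ∧ CondCounitAlg k εA ∧
  (∀ (h : H) (a : A), εA (aA (h ⊗ₜ a)) = εH k H h * εA a) ∧ ΔA 1 = 1 ⊗ₜ 1 ∧
  (∀ (h : H) (a : A), ΔA (aA (h ⊗ₜ a))
      = TensorProduct.map aA aA (tt k H H A A (δH k H h ⊗ₜ ΔA a))) ∧
  IsLComodCoalg k H cA ΔA εA ∧
  ∀ a a' : A, ΔA (a * a')
      = TensorProduct.map (μD k) (μD k)
          (middle k (braidYDl k H A cA aA) (ΔA a ⊗ₜ ΔA a'))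

/-- `B` is a bialgebra in the right-right Yetter-Drinfeld category over `H` -/
def YDrBialgebra (aB : B ⊗[k] H →ₗ[k] B) (cB : B →ₗ[k] B ⊗[k] H)
    (ΔB : B →ₗ[k] B ⊗[k] B) (εB : B →ₗ[k] k) : Prop :=
  IsRightModule k H aB ∧ IsRightComodule k H cB ∧ CondYDr k H aB cB ∧
  IsRightModuleAlgebra k H aB ∧
  (∀ b b' : B, cB (b * b')
      = TensorProduct.map (μD k) (μH k H) (tt k B H B H (cB b ⊗ₜ cB b'))) ∧
  cB 1 = 1 ⊗ₜ 1 ∧ IsCoalg k ΔB εB ∧ CondCounitAlg k εB ∧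
  (∀ (b : B) (h : H), εB (aB (b ⊗ₜ h)) = εB b * εH k H h) ∧ ΔB 1 = 1 ⊗ₜ 1 ∧
  (∀ (b : B) (h : H), ΔB (aB (b ⊗ₜ h))
      = TensorProduct.map aB aB (tt k B B H H (ΔB b ⊗ₜ δH k H h))) ∧
  IsRComodCoalg k H cB ΔB εB ∧
  ∀ b b' : B, ΔB (b * b')
      = TensorProduct.map (μD k) (μD k)
          (middle k (braidYDr k H B cB aB) (ΔB b ⊗ₜ ΔB b'))

/-- the trivial-pairing condition `b² ▷ a² ⊗ b¹ ◁ a¹ = a ⊗ b` -/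
def PairingTrivial (aA : H ⊗[k] A →ₗ[k] A) (cA : A →ₗ[k] H ⊗[k] A)
    (aB : B ⊗[k] H →ₗ[k] B) (cB : B →ₗ[k] B ⊗[k] H) : Prop :=
  ∀ (a : A) (b : B),
    sw k B A (TensorProduct.map aB aA (tt k B H H A (cB b ⊗ₜ cA a))) = a ⊗ₜ b

/-- `Σ a(h₁ ▷ a') ⊗ h₂` -/
def P1 (aA : H ⊗[k] A →ₗ[k] A) (a : A) (h : H) (a' : A) : A ⊗[k] H :=
  TensorProduct.map (μD k) LinearMap.id
    ((TensorProduct.assoc k A A H).symm (a ⊗ₜ Yel k H aA h a'))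

/-- `Σ h'₁ ⊗ (b ◁ h'₂)b'` -/
def P2 (aB : B ⊗[k] H →ₗ[k] B) (b : B) (h' : H) (b' : B) : H ⊗[k] B :=
  TensorProduct.map LinearMap.id (μD k)
    (TensorProduct.assoc k H B B
      ((sw k B H
          (TensorProduct.map aB LinearMap.id
            ((TensorProduct.assoc k B H H).symm
              (TensorProduct.map LinearMap.id (sw k H H) (b ⊗ₜ δH k H h'))))) ⊗ₜ b'))

/-- `(x⊗u)⊗(v⊗y) ↦ (x ⊗ uv) ⊗ y` -/
def combineAHB : (A ⊗[k] H) ⊗[k] (H ⊗[k] B) →ₗ[k] (A ⊗[k] H) ⊗[k] B :=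
  TensorProduct.map (TensorProduct.map LinearMap.id (μH k H)) LinearMap.id
    ∘ₗ TensorProduct.map (asl k A H H) LinearMap.id
    ∘ₗ (TensorProduct.assoc k (A ⊗[k] H) H B).symm.toLinearMap

/-- the element `a(h₁▷a') # h₂h'₁ # (b◁h'₂)b'` of the double biproduct -/
def dblMulExpr (aA : H ⊗[k] A →ₗ[k] A) (aB : B ⊗[k] H →ₗ[k] B)
    (a : A) (h : H) (b : B) (a' : A) (h' : H) (b' : B) : (A ⊗[k] H) ⊗[k] B :=
  combineAHB k H A B (P1 k H A aA a h a' ⊗ₜ P2 k H B aB b h' b')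

/-- comultiplication map of the double biproduct:
`((a₁⊗a₂)⊗(h₁⊗h₂))⊗(b₁⊗b₂) ↦ (a₁ # a₂¹h₁ # b₁¹) ⊗ (a₂² # h₂b₁² # b₂)` -/
def Wd (cA : A →ₗ[k] H ⊗[k] A) (cB : B →ₗ[k] B ⊗[k] H) :
    ((A ⊗[k] A) ⊗[k] (H ⊗[k] H)) ⊗[k] (B ⊗[k] B) →ₗ[k]
      ((A ⊗[k] H) ⊗[k] B) ⊗[k] ((A ⊗[k] H) ⊗[k] B) :=
  TensorProduct.map LinearMap.id
      (TensorProduct.map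
          (TensorProduct.map LinearMap.id (μH k H) ∘ₗ asl k A H H ∘ₗ sw k H (A ⊗[k] H))
          LinearMap.id
        ∘ₗ (TensorProduct.assoc k H (A ⊗[k] H) B).symm.toLinearMap)
    ∘ₗ (TensorProduct.assoc k ((A ⊗[k] H) ⊗[k] B) H ((A ⊗[k] H) ⊗[k] B)).toLinearMap
    ∘ₗ TensorProduct.map (TensorProduct.assoc k (A ⊗[k] H) B H).symm.toLinearMap LinearMap.id
    ∘ₗ tt k (A ⊗[k] H) (A ⊗[k] H) (B ⊗[k] H) B
    ∘ₗ TensorProduct.map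
        (TensorProduct.map (TensorProduct.map LinearMap.id (μH k H) ∘ₗ asl k A H H) LinearMap.id)
        LinearMap.id
    ∘ₗ TensorProduct.map (tt k (A ⊗[k] H) A H H) LinearMap.id
    ∘ₗ TensorProduct.map
        (TensorProduct.map
          ((TensorProduct.assoc k A H A).symm.toLinearMap ∘ₗ TensorProduct.map LinearMap.id cA)
          LinearMap.id)
        (TensorProduct.map cB LinearMap.id)

/-- counit of the double biproduct -/
def dblCounit (εA : A →ₗ[k] k) (εB : B →ₗ[k] k) : (A ⊗[k] H) ⊗[k] B →ₗ[k] k :=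
  LinearMap.mul' k k
    ∘ₗ TensorProduct.map (LinearMap.mul' k k ∘ₗ TensorProduct.map εA (εH k H)) εB

/-- induced left action on `D = A ⊗ B` -/
def dActL (aA : H ⊗[k] A →ₗ[k] A) : H ⊗[k] (A ⊗[k] B) →ₗ[k] A ⊗[k] B :=
  TensorProduct.map aA LinearMap.id ∘ₗ asr k H A B

/-- induced right action on `D = A ⊗ B` -/
def dActR (aB : B ⊗[k] H →ₗ[k] B) : (A ⊗[k] B) ⊗[k] H →ₗ[k] A ⊗[k] B :=
  TensorProduct.map LinearMap.id aB ∘ₗ asl k A B H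

/-- induced left coaction on `D = A ⊗ B` -/
def dCoactL (cA : A →ₗ[k] H ⊗[k] A) : A ⊗[k] B →ₗ[k] H ⊗[k] (A ⊗[k] B) :=
  asl k H A B ∘ₗ TensorProduct.map cA LinearMap.id

/-- induced right coaction on `D = A ⊗ B` -/
def dCoactR (cB : B →ₗ[k] B ⊗[k] H) : A ⊗[k] B →ₗ[k] (A ⊗[k] B) ⊗[k] H :=
  asr k A B H ∘ₗ TensorProduct.map LinearMap.id cB

/-- tensor product comultiplication on `D = A ⊗ B` -/
def dComul (ΔA : A →ₗ[k] A ⊗[k] A) (ΔB : B →ₗ[k] B ⊗[k] B) :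
    A ⊗[k] B →ₗ[k] (A ⊗[k] B) ⊗[k] (A ⊗[k] B) :=
  tt k A A B B ∘ₗ TensorProduct.map ΔA ΔB

/-- tensor product counit on `D = A ⊗ B` -/
def dCounit (εA : A →ₗ[k] k) (εB : B →ₗ[k] k) : A ⊗[k] B →ₗ[k] k :=
  LinearMap.mul' k k ∘ₗ TensorProduct.map εA εB

/-- `(a ⊗ b) ⊗ h ↦ (a ⊗ h) ⊗ b` -/
def phiAB : (A ⊗[k] B) ⊗[k] H →ₗ[k] (A ⊗[k] H) ⊗[k] B :=
  asr k A H B ∘ₗ TensorProduct.map LinearMap.id (sw k B H) ∘ₗ asl k A B H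

end DoubleBiproduct

section Pointwise
variable (H : Type*) [Ring H] [Bialgebra k H]
variable (M N : Type*) [AddCommGroup M] [Module k M] [AddCommGroup N] [Module k N]

/-- left action on `M ⊗ N` through the first factor -/
def pActL (aLM : H ⊗[k] M →ₗ[k] M) : H ⊗[k] (M ⊗[k] N) →ₗ[k] M ⊗[k] N :=
  TensorProduct.map aLM LinearMap.id ∘ₗ asr k H M N

/-- right action on `M ⊗ N` through the second factor -/
def pActR (aRN : N ⊗[k] H →ₗ[k] N) : (M ⊗[k] N) ⊗[k] H →ₗ[k] M ⊗[k] N :=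
  TensorProduct.map LinearMap.id aRN ∘ₗ asl k M N H

/-- left coaction on `M ⊗ N` through the first factor -/
def pCoactL (cLM : M →ₗ[k] H ⊗[k] M) : M ⊗[k] N →ₗ[k] H ⊗[k] (M ⊗[k] N) :=
  asl k H M N ∘ₗ TensorProduct.map cLM LinearMap.id

/-- right coaction on `M ⊗ N` through the second factor -/
def pCoactR (cRN : N →ₗ[k] N ⊗[k] H) : M ⊗[k] N →ₗ[k] (M ⊗[k] N) ⊗[k] H :=
  asr k M N H ∘ₗ TensorProduct.map LinearMap.id cRN

end Pointwise

section Identities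
variable (H : Type*) [Ring H] [Bialgebra k H]
variable (D : Type*) [Ring D] [Algebra k D]

/-- `c₂ ⊗ (h₁ ⊗ (d₁⁽⁰⁾ ⊗ d₁⁽¹⁾)) ↦ (c₂⁽⁻¹⁾h₁·d₁⁽⁰⁾) ⊗ (c₂⁽⁰⁾·d₁⁽¹⁾)` -/
def Fmap (aL : H ⊗[k] D →ₗ[k] D) (aR : D ⊗[k] H →ₗ[k] D) (cL : D →ₗ[k] H ⊗[k] D) :
    D ⊗[k] (H ⊗[k] (D ⊗[k] H)) →ₗ[k] D ⊗[k] D :=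
  TensorProduct.map aL LinearMap.id
    ∘ₗ asr k H D D
    ∘ₗ TensorProduct.map LinearMap.id
        (sw k D D ∘ₗ TensorProduct.map aR LinearMap.id ∘ₗ asr k D H D
          ∘ₗ TensorProduct.map LinearMap.id (sw k D H))
    ∘ₗ TensorProduct.map (μH k H) LinearMap.id
    ∘ₗ tt k H D H (D ⊗[k] H)
    ∘ₗ TensorProduct.map cL LinearMap.id

/-- `(h₁⊗h₂)⊗(c⊗d) ↦ [c(h₁·d)]₁ ⊗ ([c(h₁·d)]₂⁽⁻¹⁾h₂ ⊗ [c(h₁·d)]₂⁽⁰⁾)` -/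
def L3map (aL : H ⊗[k] D →ₗ[k] D) (cL : D →ₗ[k] H ⊗[k] D) (Δd : D →ₗ[k] D ⊗[k] D) :
    (H ⊗[k] H) ⊗[k] (D ⊗[k] D) →ₗ[k] D ⊗[k] (H ⊗[k] D) :=
  TensorProduct.map LinearMap.id (TensorProduct.map (μH k H) LinearMap.id)
    ∘ₗ TensorProduct.map LinearMap.id (asr k H H D)
    ∘ₗ asl k D H (H ⊗[k] D)
    ∘ₗ tt k D H H D
    ∘ₗ TensorProduct.map (sw k H D) LinearMap.id
    ∘ₗ asr k H D (H ⊗[k] D)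
    ∘ₗ TensorProduct.map LinearMap.id (TensorProduct.map LinearMap.id cL)
    ∘ₗ TensorProduct.map LinearMap.id Δd
    ∘ₗ TensorProduct.map LinearMap.id (μD k)
    ∘ₗ asl k H D D
    ∘ₗ TensorProduct.map LinearMap.id aL
    ∘ₗ tt k H H D D
    ∘ₗ TensorProduct.map (sw k H H) LinearMap.id

/-- `((h₁⊗h₂)⊗h₃)⊗((c₁⊗c₂)⊗(d₁⊗d₂)) ↦`
`c₁(c₂⁽⁻¹⁾h₁·d₁⁽⁰⁾) ⊗ (c₂⁽⁰⁾⁽⁻¹⁾h₂d₂⁽⁻¹⁾ ⊗ (c₂⁽⁰⁾⁽⁰⁾·d₁⁽¹⁾)(h₃·d₂⁽⁰⁾))` -/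
def R3map (aL : H ⊗[k] D →ₗ[k] D) (aR : D ⊗[k] H →ₗ[k] D)
    (cL : D →ₗ[k] H ⊗[k] D) (cR : D →ₗ[k] D ⊗[k] H) :
    ((H ⊗[k] H) ⊗[k] H) ⊗[k] ((D ⊗[k] D) ⊗[k] (D ⊗[k] D)) →ₗ[k]
      D ⊗[k] (H ⊗[k] D) :=
  TensorProduct.map (μD k) LinearMap.id
    ∘ₗ asr k D D (H ⊗[k] D)
    ∘ₗ TensorProduct.map LinearMap.id
        (asl k D H D
          ∘ₗ TensorProduct.map LinearMap.id (μD k)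
          ∘ₗ TensorProduct.map (TensorProduct.map aL (μH k H)) (TensorProduct.map aR aL)
          ∘ₗ TensorProduct.map (tt k H H D H) (tt k D H H D)
          ∘ₗ tt k (H ⊗[k] H) (D ⊗[k] H) (D ⊗[k] H) (H ⊗[k] D)
          ∘ₗ TensorProduct.map LinearMap.id (tt k D H H D))
    ∘ₗ asl k D ((H ⊗[k] H) ⊗[k] (D ⊗[k] H)) ((D ⊗[k] H) ⊗[k] (H ⊗[k] D))
    ∘ₗ TensorProduct.map
        (TensorProduct.map LinearMap.id
          (TensorProduct.map (TensorProduct.map (μH k H) (μH k H)) LinearMap.id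
            ∘ₗ TensorProduct.map (tt k H H H H) LinearMap.id
            ∘ₗ tt k (H ⊗[k] H) D (H ⊗[k] H) H))
        LinearMap.id
    ∘ₗ TensorProduct.map (asl k D ((H ⊗[k] H) ⊗[k] D) ((H ⊗[k] H) ⊗[k] H)) LinearMap.id
    ∘ₗ TensorProduct.map (sw k ((H ⊗[k] H) ⊗[k] H) (D ⊗[k] ((H ⊗[k] H) ⊗[k] D))) LinearMap.id
    ∘ₗ asr k ((H ⊗[k] H) ⊗[k] H) (D ⊗[k] ((H ⊗[k] H) ⊗[k] D))
        ((D ⊗[k] H) ⊗[k] (H ⊗[k] D))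
    ∘ₗ TensorProduct.map LinearMap.id
        (TensorProduct.map (TensorProduct.map LinearMap.id (asr k H H D)) LinearMap.id)
    ∘ₗ TensorProduct.map LinearMap.id
        (TensorProduct.map
          (TensorProduct.map LinearMap.id (TensorProduct.map LinearMap.id cL ∘ₗ cL))
          (TensorProduct.map cR cL))

end Identities

section Radford
variable (H : Type*) [Ring H] [Bialgebra k H]
variable (D : Type*) [Ring D] [Algebra k D]

/-- Radford's admissible-pair conditions for a left module algebra, left comodule
coalgebra `D` -/
def RadfordAdmissible (aL : H ⊗[k] D →ₗ[k] D) (cL : D →ₗ[k] H ⊗[k] D)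
    (Δd : D →ₗ[k] D ⊗[k] D) (εd : D →ₗ[k] k) : Prop :=
  IsLeftModule k H aL ∧ IsLeftModuleAlgebra k H aL ∧ IsLeftComodule k H cL ∧
  IsCoalg k Δd εd ∧ IsLComodCoalg k H cL Δd εd ∧ CondCounitAlg k εd ∧
  (∀ (h : H) (d : D), εd (aL (h ⊗ₜ d)) = εH k H h * εd d) ∧
  Δd 1 = 1 ⊗ₜ 1 ∧ cL 1 = 1 ⊗ₜ 1 ∧
  (∀ c d : D, cL (c * d)
      = TensorProduct.map (μH k H) (μD k) (tt k H D H D (cL c ⊗ₜ cL d))) ∧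
  (∀ (h : H) (d : D), Δd (aL (h ⊗ₜ d))
      = TensorProduct.map aL aL (tt k H H D D (δH k H h ⊗ₜ Δd d))) ∧
  (∀ c d : D, Δd (c * d)
      = TensorProduct.map (μD k) (μD k)
          (middle k (braidYDl k H D cL aL) (Δd c ⊗ₜ Δd d))) ∧
  CondYDl k H aL cL

/-- the element `d(h₁·d') ⊗ h₂h'` of the Radford biproduct -/
def radMulExpr (aL : H ⊗[k] D →ₗ[k] D) (d : D) (h : H) (d' : D) (h' : H) : D ⊗[k] H :=
  TensorProduct.map (μD k) (μH k H ∘ₗ sw k H H)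
    (tt k D H D H ((d ⊗ₜ h') ⊗ₜ Yel k H aL h d'))

/-- comultiplication map of the Radford biproduct:
`(d₁⊗d₂)⊗(h₁⊗h₂) ↦ (d₁ ⊗ d₂⁽⁻¹⁾h₁) ⊗ (d₂⁽⁰⁾ ⊗ h₂)` -/
def WRad (cL : D →ₗ[k] H ⊗[k] D) :
    (D ⊗[k] D) ⊗[k] (H ⊗[k] H) →ₗ[k] (D ⊗[k] H) ⊗[k] (D ⊗[k] H) :=
  TensorProduct.map (TensorProduct.map LinearMap.id (μH k H) ∘ₗ asl k D H H) LinearMap.id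
    ∘ₗ tt k (D ⊗[k] H) D H H
    ∘ₗ TensorProduct.map (asr k D H D) LinearMap.id
    ∘ₗ TensorProduct.map (TensorProduct.map LinearMap.id cL) LinearMap.id

/-- `(h₁·d) ⊗ h₂` reversed version: `(h₂·d) ⊗ h₁` -/
def Y2el (aL : H ⊗[k] D →ₗ[k] D) (h : H) (d : D) : D ⊗[k] H :=
  TensorProduct.comm k H D
    (TensorProduct.map LinearMap.id aL (TensorProduct.assoc k H H D (δH k H h ⊗ₜ d)))

/-- `(d·h₁) ⊗ h₂` -/
def X1el (aR : D ⊗[k] H →ₗ[k] D) (d : D) (h : H) : D ⊗[k] H :=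
  TensorProduct.map aR LinearMap.id ((TensorProduct.assoc k D H H).symm (d ⊗ₜ δH k H h))

end Radford
end LRPaper

namespace LRPaper

set_option synthInstance.maxHeartbeats 1000000
set_option maxHeartbeats 1000000

section
variable {k : Type*} [CommRing k] {H : Type*} [Ring H] [Bialgebra k H]
    {A B : Type*} [Ring A] [Algebra k A] [Ring B] [Algebra k B]
    (aA : H ⊗[k] A →ₗ[k] A) (cA : A →ₗ[k] H ⊗[k] A)
    (ΔA : A →ₗ[k] A ⊗[k] A) (εA : A →ₗ[k] k)
    (aB : B ⊗[k] H →ₗ[k] B) (cB : B →ₗ[k] B ⊗[k] H)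
    (ΔB : B →ₗ[k] B ⊗[k] B) (εB : B →ₗ[k] k)

attribute [local simp] dActL dActR dCoactL dCoactR dComul dCounit tt asl asr sw μH δH εH μD
  LinearMap.mul'_apply TensorProduct.tensorTensorTensorComm_tmul
  Algebra.TensorProduct.tmul_mul_tmul Algebra.TensorProduct.one_def
  TensorProduct.tmul_add TensorProduct.add_tmul TensorProduct.tmul_smul TensorProduct.smul_tmul'

-- bimodule
lemma aux_bimod (hAm : IsLeftModule k H aA) (hBm : IsRightModule k H aB) :
    IsBimodule k H (dActL k H A B aA) (dActR k H A B aB) := by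
  refine ⟨⟨?_, ?_⟩, ⟨?_, ?_⟩, ?_⟩
  · intro m
    induction m using TensorProduct.induction_on with
    | zero => simp
    | add x y hx hy => simp_all
    | tmul a b => simp [hAm.1]
  · intro h h' m
    induction m using TensorProduct.induction_on with
    | zero => simp
    | add x y hx hy => simp_all
    | tmul a b => simp [hAm.2]
  · intro m
    induction m using TensorProduct.induction_on with
    | zero => simp
    | add x y hx hy => simp_all
    | tmul a b => simp [hBm.1]
  · intro m h h'
    induction m using TensorProduct.induction_on with
    | zero => simp
    | add x y hx hy => simp_all
    | tmul a b => simp [hBm.2]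
  · intro h m h'
    induction m using TensorProduct.induction_on with
    | zero => simp
    | add x y hx hy => simp_all
    | tmul a b => simp

-- left module algebra
lemma aux_lma (hAalg : IsLeftModuleAlgebra k H aA) :
    IsLeftModuleAlgebra k H (dActL k H A B aA) := by
  constructor
  · intro h
    simp [hAalg.1]
  · intro h c d
    induction c using TensorProduct.induction_on with
    | zero => simp
    | add x y hx hy => simp_all [add_mul]
    | tmul a b =>
      induction d using TensorProduct.induction_on with
      | zero => simp
      | add x y hx hy => simp_all [mul_add]
      | tmul a' b' =>
        have := hAalg.2 h a a'
        simp only [μD, LinearMap.mul'_apply] at this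
        simp only [dActL, asr, LinearMap.comp_apply, LinearEquiv.coe_coe,
          TensorProduct.assoc_symm_tmul, TensorProduct.map_tmul, LinearMap.id_coe, id_eq,
          Algebra.TensorProduct.tmul_mul_tmul, this]
        generalize δH k H h = u
        induction u using TensorProduct.induction_on with
        | zero => simp
        | add x y hx hy => simp_all
        | tmul h1 h2 => simp

lemma aux_rma (hBalg : IsRightModuleAlgebra k H aB) :
    IsRightModuleAlgebra k H (dActR k H A B aB) := by
  constructor
  · intro h
    simp [hBalg.1]
  · intro c d h
    induction c using TensorProduct.induction_on with
    | zero => simp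
    | add x y hx hy => simp_all [add_mul]
    | tmul a b =>
      induction d using TensorProduct.induction_on with
      | zero => simp
      | add x y hx hy => simp_all [mul_add]
      | tmul a' b' =>
        have := hBalg.2 b b' h
        simp only [μD, LinearMap.mul'_apply] at this
        simp only [dActR, asl, LinearMap.comp_apply, LinearEquiv.coe_coe,
          TensorProduct.assoc_tmul, TensorProduct.map_tmul, LinearMap.id_coe, id_eq,
          Algebra.TensorProduct.tmul_mul_tmul, this]
        generalize δH k H h = u
        induction u using TensorProduct.induction_on with
        | zero => simp
        | add x y hx hy => simp_all
        | tmul h1 h2 => simp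

end

section
variable {k : Type*} [CommRing k]
variable {X Y Z W : Type*} [AddCommGroup X] [Module k X] [AddCommGroup Y] [Module k Y]
  [AddCommGroup Z] [Module k Z] [AddCommGroup W] [Module k W]

lemma assoc_opaque (v : X ⊗[k] Y) (c : Z) :
    TensorProduct.assoc k X Y Z (v ⊗ₜ c)
      = TensorProduct.map LinearMap.id ((TensorProduct.mk k Y Z).flip c) v := by
  induction v using TensorProduct.induction_on with
  | zero => simp
  | add x y hx hy => simp_all [TensorProduct.add_tmul]
  | tmul x y => simp

lemma assoc_symm_opaque (x : X) (w : Y ⊗[k] Z) :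
    (TensorProduct.assoc k X Y Z).symm (x ⊗ₜ w)
      = TensorProduct.map (TensorProduct.mk k X Y x) LinearMap.id w := by
  induction w using TensorProduct.induction_on with
  | zero => simp
  | add a b ha hb => simp_all [TensorProduct.tmul_add]
  | tmul y z => simp

lemma tt_opaque_left (v : X ⊗[k] Y) (z : Z) (w : W) :
    tt k X Y Z W (v ⊗ₜ (z ⊗ₜ w))
      = TensorProduct.map ((TensorProduct.mk k X Z).flip z) ((TensorProduct.mk k Y W).flip w) v := by
  induction v using TensorProduct.induction_on with
  | zero => simp [tt]
  | add a b ha hb => simp_all [tt, TensorProduct.add_tmul]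
  | tmul x y => simp [tt]

lemma tt_opaque_right (x : X) (y : Y) (w : Z ⊗[k] W) :
    tt k X Y Z W ((x ⊗ₜ y) ⊗ₜ w)
      = TensorProduct.map (TensorProduct.mk k X Z x) (TensorProduct.mk k Y W y) w := by
  induction w using TensorProduct.induction_on with
  | zero => simp [tt]
  | add a b ha hb => simp_all [tt, TensorProduct.tmul_add]
  | tmul z v => simp [tt]

end

section
variable {k : Type*} [CommRing k] {H : Type*} [Ring H] [Bialgebra k H]
    {A B : Type*} [Ring A] [Algebra k A] [Ring B] [Algebra k B]
    (aA : H ⊗[k] A →ₗ[k] A) (cA : A →ₗ[k] H ⊗[k] A)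
    (ΔA : A →ₗ[k] A ⊗[k] A) (εA : A →ₗ[k] k)
    (aB : B ⊗[k] H →ₗ[k] B) (cB : B →ₗ[k] B ⊗[k] H)
    (ΔB : B →ₗ[k] B ⊗[k] B) (εB : B →ₗ[k] k)

attribute [local simp] dActL dActR dCoactL dCoactR dComul dCounit tt asl asr sw μH δH εH μD
  LinearMap.mul'_apply TensorProduct.tensorTensorTensorComm_tmul
  Algebra.TensorProduct.tmul_mul_tmul Algebra.TensorProduct.one_def
  TensorProduct.tmul_add TensorProduct.add_tmul TensorProduct.tmul_smul TensorProduct.smul_tmul'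

lemma aux_counitalg (hAe : CondCounitAlg k εA) (hBe : CondCounitAlg k εB) :
    CondCounitAlg k (dCounit k A B εA εB) := by
  constructor
  · simp [hAe.1, hBe.1]
  · intro c d
    induction c using TensorProduct.induction_on with
    | zero => simp
    | add x y hx hy => simp_all [add_mul]
    | tmul a b =>
      induction d using TensorProduct.induction_on with
      | zero => simp
      | add x y hx hy => simp_all [mul_add, add_mul]
      | tmul a' b' => simp [hAe.2, hBe.2]; ring

lemma aux_counitacts (hAea : ∀ (h : H) (a : A), εA (aA (h ⊗ₜ a)) = εH k H h * εA a)
    (hBea : ∀ (b : B) (h : H), εB (aB (b ⊗ₜ h)) = εB b * εH k H h) :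
    CondCounitActs k H (dActL k H A B aA) (dActR k H A B aB) (dCounit k A B εA εB) := by
  intro h d
  constructor
  · induction d using TensorProduct.induction_on with
    | zero => simp
    | add x y hx hy => simp_all [mul_add, add_mul]
    | tmul a b => simp [hAea]; ring
  · induction d using TensorProduct.induction_on with
    | zero => simp
    | add x y hx hy => simp_all [mul_add, add_mul]
    | tmul a b => simp [hBea]; ring

lemma aux_units (hAc1 : cA 1 = 1 ⊗ₜ 1) (hBc1 : cB 1 = 1 ⊗ₜ 1)
    (hAd1 : ΔA 1 = 1 ⊗ₜ 1) (hBd1 : ΔB 1 = 1 ⊗ₜ 1) :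
    CondUnits k H (dCoactL k H A B cA) (dCoactR k H A B cB) (dComul k A B ΔA ΔB) := by
  refine ⟨?_, ?_, ?_⟩ <;> simp [hAc1, hBc1, hAd1, hBd1]

lemma aux_longLR : CondLongLR k H (dActL k H A B aA) (dCoactR k H A B cB) := by
  intro h m
  induction m using TensorProduct.induction_on with
  | zero => simp
  | add x y hx hy => simp_all
  | tmul a b =>
    simp only [dActL, dCoactR, asr, asl, LinearMap.comp_apply, LinearEquiv.coe_coe,
      TensorProduct.map_tmul, TensorProduct.assoc_tmul, TensorProduct.assoc_symm_tmul,
      LinearMap.id_coe, id_eq, assoc_symm_opaque, assoc_opaque]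
    generalize cB b = u
    induction u using TensorProduct.induction_on with
    | zero => simp
    | add x y hx hy => simp_all
    | tmul b1 h1 => simp

lemma aux_longRL : CondLongRL k H (dActR k H A B aB) (dCoactL k H A B cA) := by
  intro m h
  induction m using TensorProduct.induction_on with
  | zero => simp
  | add x y hx hy => simp_all
  | tmul a b =>
    simp only [dActR, dCoactL, asr, asl, LinearMap.comp_apply, LinearEquiv.coe_coe,
      TensorProduct.map_tmul, TensorProduct.assoc_tmul, TensorProduct.assoc_symm_tmul,
      LinearMap.id_coe, id_eq, assoc_symm_opaque, assoc_opaque]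
    generalize cA a = u
    induction u using TensorProduct.induction_on with
    | zero => simp
    | add x y hx hy => simp_all
    | tmul h1 a1 => simp

end

set_option synthInstance.maxHeartbeats 1000000
set_option maxHeartbeats 4000000

section
variable {k : Type*} [CommRing k] {H : Type*} [Ring H] [Bialgebra k H]
    {A B : Type*} [Ring A] [Algebra k A] [Ring B] [Algebra k B]
    (aA : H ⊗[k] A →ₗ[k] A) (cA : A →ₗ[k] H ⊗[k] A)
    (ΔA : A →ₗ[k] A ⊗[k] A) (εA : A →ₗ[k] k)
    (aB : B ⊗[k] H →ₗ[k] B) (cB : B →ₗ[k] B ⊗[k] H)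
    (ΔB : B →ₗ[k] B ⊗[k] B) (εB : B →ₗ[k] k)

lemma dCoactL_tmul (a : A) (b : B) :
    dCoactL k H A B cA (a ⊗ₜ b)
      = TensorProduct.map LinearMap.id ((TensorProduct.mk k A B).flip b) (cA a) := by
  simp [dCoactL, asl, assoc_opaque]

lemma dCoactR_tmul (a : A) (b : B) :
    dCoactR k H A B cB (a ⊗ₜ b)
      = TensorProduct.map (TensorProduct.mk k A B a) LinearMap.id (cB b) := by
  simp [dCoactR, asr, assoc_symm_opaque]

attribute [local simp] dActL dActR dComul dCounit tt asl asr sw μH δH εH μD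
  LinearMap.mul'_apply TensorProduct.tensorTensorTensorComm_tmul
  Algebra.TensorProduct.tmul_mul_tmul Algebra.TensorProduct.one_def
  TensorProduct.tmul_add TensorProduct.add_tmul TensorProduct.tmul_smul TensorProduct.smul_tmul'
  assoc_opaque assoc_symm_opaque tt_opaque_left tt_opaque_right

lemma aux_bicomod (hAcom : IsLeftComodule k H cA) (hBcom : IsRightComodule k H cB) :
    IsBicomodule k H (dCoactL k H A B cA) (dCoactR k H A B cB) := by
  refine ⟨⟨?_, ?_⟩, ⟨?_, ?_⟩, ?_⟩
  · intro m
    induction m using TensorProduct.induction_on with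
    | zero => simp only [map_zero, TensorProduct.zero_tmul, TensorProduct.tmul_zero]
    | add x y hx hy => simp only [map_add, TensorProduct.add_tmul, TensorProduct.tmul_add, hx, hy]
    | tmul a b =>
      have h1 : ∀ u : H ⊗[k] A,
          TensorProduct.lid k (A ⊗[k] B) (TensorProduct.map (εH k H) LinearMap.id
            (TensorProduct.map LinearMap.id ((TensorProduct.mk k A B).flip b) u))
          = (TensorProduct.lid k A (TensorProduct.map (εH k H) LinearMap.id u)) ⊗ₜ b := by
        intro u
        induction u using TensorProduct.induction_on with
        | zero => simp only [map_zero, TensorProduct.zero_tmul, TensorProduct.tmul_zero]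
        | add x y hx hy => simp only [map_add, TensorProduct.add_tmul, TensorProduct.tmul_add, hx, hy]
        | tmul h x => simp
      rw [dCoactL_tmul, h1, hAcom.1]
  · intro m
    induction m using TensorProduct.induction_on with
    | zero => simp only [map_zero, TensorProduct.zero_tmul, TensorProduct.tmul_zero]
    | add x y hx hy => simp only [map_add, TensorProduct.add_tmul, TensorProduct.tmul_add, hx, hy]
    | tmul a b =>
      have h1 : ∀ u : H ⊗[k] A,
          TensorProduct.map LinearMap.id (dCoactL k H A B cA)
            (TensorProduct.map LinearMap.id ((TensorProduct.mk k A B).flip b) u)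
          = TensorProduct.map LinearMap.id
              (TensorProduct.map LinearMap.id ((TensorProduct.mk k A B).flip b))
              (TensorProduct.map LinearMap.id cA u) := by
        intro u
        induction u using TensorProduct.induction_on with
        | zero => simp only [map_zero, TensorProduct.zero_tmul, TensorProduct.tmul_zero]
        | add x y hx hy => simp only [map_add, TensorProduct.add_tmul, TensorProduct.tmul_add, hx, hy]
        | tmul h x => simp [dCoactL_tmul]
      have h2 : ∀ u : H ⊗[k] A,
          TensorProduct.assoc k H H (A ⊗[k] B) (TensorProduct.map (δH k H) LinearMap.id
            (TensorProduct.map LinearMap.id ((TensorProduct.mk k A B).flip b) u))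
          = TensorProduct.map LinearMap.id
              (TensorProduct.map LinearMap.id ((TensorProduct.mk k A B).flip b))
              (TensorProduct.assoc k H H A (TensorProduct.map (δH k H) LinearMap.id u)) := by
        intro u
        induction u using TensorProduct.induction_on with
        | zero => simp only [map_zero, TensorProduct.zero_tmul, TensorProduct.tmul_zero]
        | add x y hx hy => simp only [map_add, TensorProduct.add_tmul, TensorProduct.tmul_add, hx, hy]
        | tmul h x =>
          simp only [TensorProduct.map_tmul, LinearMap.id_coe, id_eq, assoc_opaque]
          generalize δH k H h = v
          induction v using TensorProduct.induction_on with
          | zero => simp only [map_zero, TensorProduct.zero_tmul, TensorProduct.tmul_zero]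
          | add x' y' hx hy => simp only [map_add, TensorProduct.add_tmul, TensorProduct.tmul_add, hx, hy]
          | tmul h1 h2 => simp
      rw [dCoactL_tmul, h1, h2, hAcom.2]
  · intro m
    induction m using TensorProduct.induction_on with
    | zero => simp only [map_zero, TensorProduct.zero_tmul, TensorProduct.tmul_zero]
    | add x y hx hy => simp only [map_add, TensorProduct.add_tmul, TensorProduct.tmul_add, hx, hy]
    | tmul a b =>
      have h1 : ∀ v : B ⊗[k] H,
          TensorProduct.rid k (A ⊗[k] B) (TensorProduct.map LinearMap.id (εH k H)
            (TensorProduct.map (TensorProduct.mk k A B a) LinearMap.id v))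
          = a ⊗ₜ (TensorProduct.rid k B (TensorProduct.map LinearMap.id (εH k H) v)) := by
        intro v
        induction v using TensorProduct.induction_on with
        | zero => simp only [map_zero, TensorProduct.zero_tmul, TensorProduct.tmul_zero]
        | add x y hx hy => simp only [map_add, TensorProduct.add_tmul, TensorProduct.tmul_add, hx, hy]
        | tmul y g => simp
      rw [dCoactR_tmul, h1, hBcom.1]
  · intro m
    induction m using TensorProduct.induction_on with
    | zero => simp only [map_zero, TensorProduct.zero_tmul, TensorProduct.tmul_zero]
    | add x y hx hy => simp only [map_add, TensorProduct.add_tmul, TensorProduct.tmul_add, hx, hy]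
    | tmul a b =>
      have h1 : ∀ v : B ⊗[k] H,
          TensorProduct.map (dCoactR k H A B cB) LinearMap.id
            (TensorProduct.map (TensorProduct.mk k A B a) LinearMap.id v)
          = TensorProduct.map
              (TensorProduct.map (TensorProduct.mk k A B a) LinearMap.id) LinearMap.id
              (TensorProduct.map cB LinearMap.id v) := by
        intro v
        induction v using TensorProduct.induction_on with
        | zero => simp only [map_zero, TensorProduct.zero_tmul, TensorProduct.tmul_zero]
        | add x y hx hy => simp only [map_add, TensorProduct.add_tmul, TensorProduct.tmul_add, hx, hy]
        | tmul y g => simp [dCoactR_tmul]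
      have h2 : ∀ v : B ⊗[k] H,
          (TensorProduct.assoc k (A ⊗[k] B) H H).symm (TensorProduct.map LinearMap.id (δH k H)
            (TensorProduct.map (TensorProduct.mk k A B a) LinearMap.id v))
          = TensorProduct.map
              (TensorProduct.map (TensorProduct.mk k A B a) LinearMap.id) LinearMap.id
              ((TensorProduct.assoc k B H H).symm
                (TensorProduct.map LinearMap.id (δH k H) v)) := by
        intro v
        induction v using TensorProduct.induction_on with
        | zero => simp only [map_zero, TensorProduct.zero_tmul, TensorProduct.tmul_zero]
        | add x y hx hy => simp only [map_add, TensorProduct.add_tmul, TensorProduct.tmul_add, hx, hy]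
        | tmul y g =>
          simp only [TensorProduct.map_tmul, LinearMap.id_coe, id_eq, assoc_symm_opaque]
          generalize δH k H g = w
          induction w using TensorProduct.induction_on with
          | zero => simp only [map_zero, TensorProduct.zero_tmul, TensorProduct.tmul_zero]
          | add x' y' hx hy => simp only [map_add, TensorProduct.add_tmul, TensorProduct.tmul_add, hx, hy]
          | tmul h1 h2 => simp
      rw [dCoactR_tmul, h1, h2, hBcom.2]
  · intro m
    induction m using TensorProduct.induction_on with
    | zero => simp only [map_zero, TensorProduct.zero_tmul, TensorProduct.tmul_zero]
    | add x y hx hy => simp only [map_add, TensorProduct.add_tmul, TensorProduct.tmul_add, hx, hy]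
    | tmul a b =>
      have h1 : ∀ u : H ⊗[k] A,
          TensorProduct.map LinearMap.id (dCoactR k H A B cB)
            (TensorProduct.map LinearMap.id ((TensorProduct.mk k A B).flip b) u)
          = (TensorProduct.map LinearMap.id (asr k A B H) ∘ₗ asl k H A (B ⊗[k] H))
              (u ⊗ₜ cB b) := by
        intro u
        induction u using TensorProduct.induction_on with
        | zero => simp only [map_zero, TensorProduct.zero_tmul, TensorProduct.tmul_zero]
        | add x y hx hy => simp only [map_add, TensorProduct.add_tmul, TensorProduct.tmul_add, hx, hy]
        | tmul h x => simp [dCoactR_tmul]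
      have h2 : ∀ v : B ⊗[k] H,
          TensorProduct.assoc k H (A ⊗[k] B) H
            (TensorProduct.map (dCoactL k H A B cA) LinearMap.id
              (TensorProduct.map (TensorProduct.mk k A B a) LinearMap.id v))
          = (TensorProduct.map LinearMap.id (asr k A B H) ∘ₗ asl k H A (B ⊗[k] H))
              (cA a ⊗ₜ v) := by
        intro v
        induction v using TensorProduct.induction_on with
        | zero => simp only [map_zero, TensorProduct.zero_tmul, TensorProduct.tmul_zero]
        | add x y hx hy => simp only [map_add, TensorProduct.add_tmul, TensorProduct.tmul_add, hx, hy]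
        | tmul y g =>
          simp only [TensorProduct.map_tmul, LinearMap.id_coe, id_eq, TensorProduct.mk_apply,
            dCoactL_tmul, LinearMap.comp_apply, asl, asr, LinearEquiv.coe_coe, assoc_opaque]
          generalize cA a = w
          induction w using TensorProduct.induction_on with
          | zero => simp only [map_zero, TensorProduct.zero_tmul, TensorProduct.tmul_zero]
          | add x' y' hx hy => simp only [map_add, TensorProduct.add_tmul, TensorProduct.tmul_add, hx, hy]
          | tmul h x => simp
      rw [dCoactL_tmul, dCoactR_tmul, h1, h2]
end

set_option synthInstance.maxHeartbeats 1000000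
set_option maxHeartbeats 4000000

section
variable {k : Type*} [CommRing k] {H : Type*} [Ring H] [Bialgebra k H]
    {A B : Type*} [Ring A] [Algebra k A] [Ring B] [Algebra k B]
    (aA : H ⊗[k] A →ₗ[k] A) (cA : A →ₗ[k] H ⊗[k] A)
    (ΔA : A →ₗ[k] A ⊗[k] A) (εA : A →ₗ[k] k)
    (aB : B ⊗[k] H →ₗ[k] B) (cB : B →ₗ[k] B ⊗[k] H)
    (ΔB : B →ₗ[k] B ⊗[k] B) (εB : B →ₗ[k] k)

attribute [local simp] dComul dCounit tt asl asr sw μH δH εH μD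
  LinearMap.mul'_apply TensorProduct.tensorTensorTensorComm_tmul
  Algebra.TensorProduct.tmul_mul_tmul Algebra.TensorProduct.one_def
  TensorProduct.tmul_add TensorProduct.add_tmul TensorProduct.tmul_smul TensorProduct.smul_tmul'
  assoc_opaque assoc_symm_opaque tt_opaque_left tt_opaque_right

lemma aux_coalg_counitl (hAco : ∀ a : A,
      TensorProduct.lid k A (TensorProduct.map εA LinearMap.id (ΔA a)) = a)
    (hBco : ∀ b : B, TensorProduct.lid k B (TensorProduct.map εB LinearMap.id (ΔB b)) = b) :
    ∀ m : A ⊗[k] B, TensorProduct.lid k (A ⊗[k] B)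
      (TensorProduct.map (dCounit k A B εA εB) LinearMap.id (dComul k A B ΔA ΔB m)) = m := by
  intro m
  induction m using TensorProduct.induction_on with
  | zero => simp only [map_zero]
  | add x y hx hy => simp only [map_add, hx, hy]
  | tmul a b =>
    have h1 : ∀ (u : A ⊗[k] A) (v : B ⊗[k] B),
        TensorProduct.lid k (A ⊗[k] B) (TensorProduct.map (dCounit k A B εA εB) LinearMap.id
          (tt k A A B B (u ⊗ₜ v)))
        = (TensorProduct.lid k A (TensorProduct.map εA LinearMap.id u)) ⊗ₜ
            (TensorProduct.lid k B (TensorProduct.map εB LinearMap.id v)) := by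
      intro u v
      induction u using TensorProduct.induction_on with
      | zero => simp only [map_zero, TensorProduct.zero_tmul, TensorProduct.tmul_zero]
      | add x y hx hy => simp only [map_add, TensorProduct.add_tmul, TensorProduct.tmul_add, hx, hy]
      | tmul a1 a2 =>
        induction v using TensorProduct.induction_on with
        | zero => simp only [map_zero, TensorProduct.zero_tmul, TensorProduct.tmul_zero]
        | add x y hx hy =>
          simp only [map_add, TensorProduct.add_tmul, TensorProduct.tmul_add, hx, hy]
        | tmul b1 b2 => simp [smul_smul, mul_comm]
    have e : dComul k A B ΔA ΔB (a ⊗ₜ b) = tt k A A B B (ΔA a ⊗ₜ ΔB b) := by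
      simp [dComul]
    rw [e, h1, hAco, hBco]

lemma aux_coalg_counitr (hAco : ∀ a : A,
      TensorProduct.rid k A (TensorProduct.map LinearMap.id εA (ΔA a)) = a)
    (hBco : ∀ b : B, TensorProduct.rid k B (TensorProduct.map LinearMap.id εB (ΔB b)) = b) :
    ∀ m : A ⊗[k] B, TensorProduct.rid k (A ⊗[k] B)
      (TensorProduct.map LinearMap.id (dCounit k A B εA εB) (dComul k A B ΔA ΔB m)) = m := by
  intro m
  induction m using TensorProduct.induction_on with
  | zero => simp only [map_zero]
  | add x y hx hy => simp only [map_add, hx, hy]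
  | tmul a b =>
    have h1 : ∀ (u : A ⊗[k] A) (v : B ⊗[k] B),
        TensorProduct.rid k (A ⊗[k] B) (TensorProduct.map LinearMap.id (dCounit k A B εA εB)
          (tt k A A B B (u ⊗ₜ v)))
        = (TensorProduct.rid k A (TensorProduct.map LinearMap.id εA u)) ⊗ₜ
            (TensorProduct.rid k B (TensorProduct.map LinearMap.id εB v)) := by
      intro u v
      induction u using TensorProduct.induction_on with
      | zero => simp only [map_zero, TensorProduct.zero_tmul, TensorProduct.tmul_zero]
      | add x y hx hy => simp only [map_add, TensorProduct.add_tmul, TensorProduct.tmul_add, hx, hy]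
      | tmul a1 a2 =>
        induction v using TensorProduct.induction_on with
        | zero => simp only [map_zero, TensorProduct.zero_tmul, TensorProduct.tmul_zero]
        | add x y hx hy =>
          simp only [map_add, TensorProduct.add_tmul, TensorProduct.tmul_add, hx, hy]
        | tmul b1 b2 => simp [smul_smul, mul_comm]
    have e : dComul k A B ΔA ΔB (a ⊗ₜ b) = tt k A A B B (ΔA a ⊗ₜ ΔB b) := by
      simp [dComul]
    rw [e, h1, hAco, hBco]

lemma aux_coalg_coassoc
    (hAco : ∀ a : A, TensorProduct.assoc k A A A
        (TensorProduct.map ΔA LinearMap.id (ΔA a)) = TensorProduct.map LinearMap.id ΔA (ΔA a))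
    (hBco : ∀ b : B, TensorProduct.assoc k B B B
        (TensorProduct.map ΔB LinearMap.id (ΔB b)) = TensorProduct.map LinearMap.id ΔB (ΔB b)) :
    ∀ m : A ⊗[k] B, TensorProduct.assoc k (A ⊗[k] B) (A ⊗[k] B) (A ⊗[k] B)
        (TensorProduct.map (dComul k A B ΔA ΔB) LinearMap.id (dComul k A B ΔA ΔB m))
      = TensorProduct.map LinearMap.id (dComul k A B ΔA ΔB) (dComul k A B ΔA ΔB m) := by
  intro m
  induction m using TensorProduct.induction_on with
  | zero => simp only [map_zero]
  | add x y hx hy => simp only [map_add, hx, hy]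
  | tmul a b =>
    have h1 : ∀ (u : A ⊗[k] A) (v : B ⊗[k] B),
        TensorProduct.assoc k (A ⊗[k] B) (A ⊗[k] B) (A ⊗[k] B)
          (TensorProduct.map (dComul k A B ΔA ΔB) LinearMap.id (tt k A A B B (u ⊗ₜ v)))
        = (TensorProduct.map LinearMap.id (tt k A A B B) ∘ₗ tt k A (A ⊗[k] A) B (B ⊗[k] B))
            ((TensorProduct.assoc k A A A (TensorProduct.map ΔA LinearMap.id u)) ⊗ₜ
              (TensorProduct.assoc k B B B (TensorProduct.map ΔB LinearMap.id v))) := by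
      intro u v
      induction u using TensorProduct.induction_on with
      | zero => simp only [map_zero, TensorProduct.zero_tmul, TensorProduct.tmul_zero]
      | add x y hx hy => simp only [map_add, TensorProduct.add_tmul, TensorProduct.tmul_add, hx, hy]
      | tmul a1 a2 =>
        induction v using TensorProduct.induction_on with
        | zero => simp only [map_zero, TensorProduct.zero_tmul, TensorProduct.tmul_zero]
        | add x y hx hy =>
          simp only [map_add, TensorProduct.add_tmul, TensorProduct.tmul_add, hx, hy]
        | tmul b1 b2 =>
          have e : dComul k A B ΔA ΔB (a1 ⊗ₜ b1) = tt k A A B B (ΔA a1 ⊗ₜ ΔB b1) := by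
            simp [dComul]
          simp only [tt, LinearMap.comp_apply, LinearEquiv.coe_coe,
            TensorProduct.tensorTensorTensorComm_tmul, TensorProduct.map_tmul,
            LinearMap.id_coe, id_eq, e, assoc_opaque]
          generalize ΔA a1 = p
          induction p using TensorProduct.induction_on with
          | zero => simp only [map_zero, TensorProduct.zero_tmul, TensorProduct.tmul_zero]
          | add x y hx hy =>
            simp only [map_add, TensorProduct.add_tmul, TensorProduct.tmul_add, hx, hy]
          | tmul x y =>
            generalize ΔB b1 = q
            induction q using TensorProduct.induction_on with
            | zero => simp only [map_zero, TensorProduct.zero_tmul, TensorProduct.tmul_zero]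
            | add x' y' hx hy =>
              simp only [map_add, TensorProduct.add_tmul, TensorProduct.tmul_add, hx, hy]
            | tmul p' q' => simp
    have h2 : ∀ (u : A ⊗[k] A) (v : B ⊗[k] B),
        TensorProduct.map LinearMap.id (dComul k A B ΔA ΔB) (tt k A A B B (u ⊗ₜ v))
        = (TensorProduct.map LinearMap.id (tt k A A B B) ∘ₗ tt k A (A ⊗[k] A) B (B ⊗[k] B))
            ((TensorProduct.map LinearMap.id ΔA u) ⊗ₜ (TensorProduct.map LinearMap.id ΔB v)) := by
      intro u v
      induction u using TensorProduct.induction_on with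
      | zero => simp only [map_zero, TensorProduct.zero_tmul, TensorProduct.tmul_zero]
      | add x y hx hy => simp only [map_add, TensorProduct.add_tmul, TensorProduct.tmul_add, hx, hy]
      | tmul a1 a2 =>
        induction v using TensorProduct.induction_on with
        | zero => simp only [map_zero, TensorProduct.zero_tmul, TensorProduct.tmul_zero]
        | add x y hx hy =>
          simp only [map_add, TensorProduct.add_tmul, TensorProduct.tmul_add, hx, hy]
        | tmul b1 b2 =>
          have e : dComul k A B ΔA ΔB (a2 ⊗ₜ b2) = tt k A A B B (ΔA a2 ⊗ₜ ΔB b2) := by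
            simp [dComul]
          simp [e]
    have e : dComul k A B ΔA ΔB (a ⊗ₜ b) = tt k A A B B (ΔA a ⊗ₜ ΔB b) := by
      simp [dComul]
    rw [e, h1, h2, hAco, hBco]

lemma aux_coalg (hAcoalg : IsCoalg k ΔA εA) (hBcoalg : IsCoalg k ΔB εB) :
    IsCoalg k (dComul k A B ΔA ΔB) (dCounit k A B εA εB) :=
  ⟨aux_coalg_counitl ΔA εA ΔB εB hAcoalg.1 hBcoalg.1,
   aux_coalg_counitr ΔA εA ΔB εB hAcoalg.2.1 hBcoalg.2.1,
   aux_coalg_coassoc ΔA ΔB hAcoalg.2.2 hBcoalg.2.2⟩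

end

set_option synthInstance.maxHeartbeats 1000000
set_option maxHeartbeats 4000000

section
variable {k : Type*} [CommRing k] {H : Type*} [Ring H] [Bialgebra k H]
    {A B : Type*} [Ring A] [Algebra k A] [Ring B] [Algebra k B]
    (aA : H ⊗[k] A →ₗ[k] A) (cA : A →ₗ[k] H ⊗[k] A)
    (ΔA : A →ₗ[k] A ⊗[k] A) (εA : A →ₗ[k] k)
    (aB : B ⊗[k] H →ₗ[k] B) (cB : B →ₗ[k] B ⊗[k] H)
    (ΔB : B →ₗ[k] B ⊗[k] B) (εB : B →ₗ[k] k)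

attribute [local simp] dComul dCounit tt asl asr sw μH δH εH μD
  LinearMap.mul'_apply TensorProduct.tensorTensorTensorComm_tmul
  Algebra.TensorProduct.tmul_mul_tmul Algebra.TensorProduct.one_def
  TensorProduct.tmul_add TensorProduct.add_tmul TensorProduct.tmul_smul TensorProduct.smul_tmul'
  assoc_opaque assoc_symm_opaque tt_opaque_left tt_opaque_right dCoactL_tmul dCoactR_tmul

lemma aux_lcomodcoalg (hAl : IsLComodCoalg k H cA ΔA εA) :
    IsLComodCoalg k H (dCoactL k H A B cA) (dComul k A B ΔA ΔB) (dCounit k A B εA εB) := by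
  constructor
  · intro m
    induction m using TensorProduct.induction_on with
    | zero => simp only [map_zero]
    | add x y hx hy => simp only [map_add, hx, hy]
    | tmul a b =>
      have h1 : ∀ (u : A ⊗[k] A) (v : B ⊗[k] B),
          TensorProduct.map (μH k H) LinearMap.id
            (tt k H (A ⊗[k] B) H (A ⊗[k] B)
              (TensorProduct.map (dCoactL k H A B cA) (dCoactL k H A B cA)
                (tt k A A B B (u ⊗ₜ v))))
          = (TensorProduct.map LinearMap.id (tt k A A B B) ∘ₗ asl k H (A ⊗[k] A) (B ⊗[k] B))
              ((TensorProduct.map (μH k H) LinearMap.id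
                (tt k H A H A (TensorProduct.map cA cA u))) ⊗ₜ v) := by
        intro u v
        induction u using TensorProduct.induction_on with
        | zero => simp only [map_zero, TensorProduct.zero_tmul, TensorProduct.tmul_zero]
        | add x y hx hy =>
          simp only [map_add, TensorProduct.add_tmul, TensorProduct.tmul_add, hx, hy]
        | tmul a1 a2 =>
          induction v using TensorProduct.induction_on with
          | zero => simp only [map_zero, TensorProduct.zero_tmul, TensorProduct.tmul_zero]
          | add x y hx hy =>
            simp only [map_add, TensorProduct.add_tmul, TensorProduct.tmul_add, hx, hy]
          | tmul b1 b2 =>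
            simp only [tt, LinearMap.comp_apply, LinearEquiv.coe_coe,
              TensorProduct.tensorTensorTensorComm_tmul, TensorProduct.map_tmul,
              LinearMap.id_coe, id_eq, dCoactL_tmul]
            generalize cA a1 = w1
            induction w1 using TensorProduct.induction_on with
            | zero => simp only [map_zero, TensorProduct.zero_tmul, TensorProduct.tmul_zero]
            | add x y hx hy =>
              simp only [map_add, TensorProduct.add_tmul, TensorProduct.tmul_add, hx, hy]
            | tmul h x =>
              generalize cA a2 = w2
              induction w2 using TensorProduct.induction_on with
              | zero => simp only [map_zero, TensorProduct.zero_tmul, TensorProduct.tmul_zero]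
              | add x' y' hx hy =>
                simp only [map_add, TensorProduct.add_tmul, TensorProduct.tmul_add, hx, hy]
              | tmul h' y => simp
      have h2 : ∀ w : H ⊗[k] A,
          TensorProduct.map LinearMap.id (dComul k A B ΔA ΔB)
            (TensorProduct.map LinearMap.id ((TensorProduct.mk k A B).flip b) w)
          = (TensorProduct.map LinearMap.id (tt k A A B B) ∘ₗ asl k H (A ⊗[k] A) (B ⊗[k] B))
              ((TensorProduct.map LinearMap.id ΔA w) ⊗ₜ ΔB b) := by
        intro w
        induction w using TensorProduct.induction_on with
        | zero => simp only [map_zero, TensorProduct.zero_tmul, TensorProduct.tmul_zero]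
        | add x y hx hy =>
          simp only [map_add, TensorProduct.add_tmul, TensorProduct.tmul_add, hx, hy]
        | tmul h x => simp
      have e : dComul k A B ΔA ΔB (a ⊗ₜ b) = tt k A A B B (ΔA a ⊗ₜ ΔB b) := by simp [dComul]
      rw [e, h1, hAl.1, dCoactL_tmul, h2]
  · intro m
    induction m using TensorProduct.induction_on with
    | zero => simp only [map_zero, zero_smul]
    | add x y hx hy => simp only [map_add, hx, hy, add_smul]
    | tmul a b =>
      have h3 : ∀ w : H ⊗[k] A,
          TensorProduct.rid k H (TensorProduct.map LinearMap.id (dCounit k A B εA εB)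
            (TensorProduct.map LinearMap.id ((TensorProduct.mk k A B).flip b) w))
          = εB b • (TensorProduct.rid k H (TensorProduct.map LinearMap.id εA w)) := by
        intro w
        induction w using TensorProduct.induction_on with
        | zero => simp only [map_zero, smul_zero]
        | add x y hx hy => simp only [map_add, smul_add, hx, hy]
        | tmul h x => simp [smul_smul, mul_comm]
      rw [dCoactL_tmul, h3, hAl.2]
      simp [smul_smul, mul_comm]

lemma aux_rcomodcoalg (hBl : IsRComodCoalg k H cB ΔB εB) :
    IsRComodCoalg k H (dCoactR k H A B cB) (dComul k A B ΔA ΔB) (dCounit k A B εA εB) := by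
  constructor
  · intro m
    induction m using TensorProduct.induction_on with
    | zero => simp only [map_zero]
    | add x y hx hy => simp only [map_add, hx, hy]
    | tmul a b =>
      have h1 : ∀ (u : A ⊗[k] A) (v : B ⊗[k] B),
          TensorProduct.map LinearMap.id (μH k H)
            (tt k (A ⊗[k] B) H (A ⊗[k] B) H
              (TensorProduct.map (dCoactR k H A B cB) (dCoactR k H A B cB)
                (tt k A A B B (u ⊗ₜ v))))
          = (TensorProduct.map (tt k A A B B) LinearMap.id ∘ₗ asr k (A ⊗[k] A) (B ⊗[k] B) H)
              (u ⊗ₜ (TensorProduct.map LinearMap.id (μH k H)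
                (tt k B H B H (TensorProduct.map cB cB v)))) := by
        intro u v
        induction u using TensorProduct.induction_on with
        | zero => simp only [map_zero, TensorProduct.zero_tmul, TensorProduct.tmul_zero]
        | add x y hx hy =>
          simp only [map_add, TensorProduct.add_tmul, TensorProduct.tmul_add, hx, hy]
        | tmul a1 a2 =>
          induction v using TensorProduct.induction_on with
          | zero => simp only [map_zero, TensorProduct.zero_tmul, TensorProduct.tmul_zero]
          | add x y hx hy =>
            simp only [map_add, TensorProduct.add_tmul, TensorProduct.tmul_add, hx, hy]
          | tmul b1 b2 =>
            simp only [tt, LinearMap.comp_apply, LinearEquiv.coe_coe,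
              TensorProduct.tensorTensorTensorComm_tmul, TensorProduct.map_tmul,
              LinearMap.id_coe, id_eq, dCoactR_tmul]
            generalize cB b1 = w1
            induction w1 using TensorProduct.induction_on with
            | zero => simp only [map_zero, TensorProduct.zero_tmul, TensorProduct.tmul_zero]
            | add x y hx hy =>
              simp only [map_add, TensorProduct.add_tmul, TensorProduct.tmul_add, hx, hy]
            | tmul y g =>
              generalize cB b2 = w2
              induction w2 using TensorProduct.induction_on with
              | zero => simp only [map_zero, TensorProduct.zero_tmul, TensorProduct.tmul_zero]
              | add x' y' hx hy =>
                simp only [map_add, TensorProduct.add_tmul, TensorProduct.tmul_add, hx, hy]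
              | tmul y' g' => simp
      have h2 : ∀ w : B ⊗[k] H,
          TensorProduct.map (dComul k A B ΔA ΔB) LinearMap.id
            (TensorProduct.map (TensorProduct.mk k A B a) LinearMap.id w)
          = (TensorProduct.map (tt k A A B B) LinearMap.id ∘ₗ asr k (A ⊗[k] A) (B ⊗[k] B) H)
              (ΔA a ⊗ₜ (TensorProduct.map ΔB LinearMap.id w)) := by
        intro w
        induction w using TensorProduct.induction_on with
        | zero => simp only [map_zero, TensorProduct.zero_tmul, TensorProduct.tmul_zero]
        | add x y hx hy =>
          simp only [map_add, TensorProduct.add_tmul, TensorProduct.tmul_add, hx, hy]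
        | tmul y g => simp
      have e : dComul k A B ΔA ΔB (a ⊗ₜ b) = tt k A A B B (ΔA a ⊗ₜ ΔB b) := by simp [dComul]
      rw [e, h1, hBl.1, dCoactR_tmul, h2]
  · intro m
    induction m using TensorProduct.induction_on with
    | zero => simp only [map_zero, zero_smul]
    | add x y hx hy => simp only [map_add, hx, hy, add_smul]
    | tmul a b =>
      have h3 : ∀ w : B ⊗[k] H,
          TensorProduct.lid k H (TensorProduct.map (dCounit k A B εA εB) LinearMap.id
            (TensorProduct.map (TensorProduct.mk k A B a) LinearMap.id w))
          = εA a • (TensorProduct.lid k H (TensorProduct.map εB LinearMap.id w)) := by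
        intro w
        induction w using TensorProduct.induction_on with
        | zero => simp only [map_zero, smul_zero]
        | add x y hx hy => simp only [map_add, smul_add, hx, hy]
        | tmul y g => simp [smul_smul, mul_comm]
      rw [dCoactR_tmul, h3, hBl.2]
      simp [smul_smul, mul_comm]

end

set_option synthInstance.maxHeartbeats 1000000
set_option maxHeartbeats 4000000

section
variable {k : Type*} [CommRing k] {H : Type*} [Ring H] [Bialgebra k H]
    {A B : Type*} [Ring A] [Algebra k A] [Ring B] [Algebra k B]
    (aA : H ⊗[k] A →ₗ[k] A) (cA : A →ₗ[k] H ⊗[k] A)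
    (ΔA : A →ₗ[k] A ⊗[k] A) (εA : A →ₗ[k] k)
    (aB : B ⊗[k] H →ₗ[k] B) (cB : B →ₗ[k] B ⊗[k] H)
    (ΔB : B →ₗ[k] B ⊗[k] B) (εB : B →ₗ[k] k)

attribute [local simp] dActL dActR dComul dCounit tt asl asr sw μH δH εH μD
  LinearMap.mul'_apply TensorProduct.tensorTensorTensorComm_tmul
  Algebra.TensorProduct.tmul_mul_tmul Algebra.TensorProduct.one_def
  TensorProduct.tmul_add TensorProduct.add_tmul TensorProduct.tmul_smul TensorProduct.smul_tmul'
  assoc_opaque assoc_symm_opaque tt_opaque_left tt_opaque_right dCoactL_tmul dCoactR_tmul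

lemma aux_coactmul
    (hAcm : ∀ a a' : A, cA (a * a')
      = TensorProduct.map (μH k H) (μD k) (tt k H A H A (cA a ⊗ₜ cA a')))
    (hBcm : ∀ b b' : B, cB (b * b')
      = TensorProduct.map (μD k) (μH k H) (tt k B H B H (cB b ⊗ₜ cB b'))) :
    CondCoactMul k H (dCoactL k H A B cA) (dCoactR k H A B cB) := by
  constructor
  · intro c d
    induction c using TensorProduct.induction_on with
    | zero => simp only [zero_mul, map_zero, TensorProduct.zero_tmul]
    | add x y hx hy => simp only [add_mul, map_add, TensorProduct.add_tmul, hx, hy]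
    | tmul a b =>
      induction d using TensorProduct.induction_on with
      | zero => simp only [mul_zero, map_zero, TensorProduct.tmul_zero, map_zero]
      | add x y hx hy =>
        simp only [mul_add, map_add, TensorProduct.tmul_add, hx, hy]
      | tmul a' b' =>
        have h1 : ∀ u v : H ⊗[k] A,
            TensorProduct.map LinearMap.id ((TensorProduct.mk k A B).flip (b * b'))
              (TensorProduct.map (μH k H) (μD k) (tt k H A H A (u ⊗ₜ v)))
            = TensorProduct.map (μH k H) (μD k)
                (tt k H (A ⊗[k] B) H (A ⊗[k] B)
                  ((TensorProduct.map LinearMap.id ((TensorProduct.mk k A B).flip b) u) ⊗ₜ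
                    (TensorProduct.map LinearMap.id ((TensorProduct.mk k A B).flip b') v))) := by
          intro u v
          induction u using TensorProduct.induction_on with
          | zero => simp only [map_zero, TensorProduct.zero_tmul, TensorProduct.tmul_zero]
          | add x y hx hy =>
            simp only [map_add, TensorProduct.add_tmul, TensorProduct.tmul_add, hx, hy]
          | tmul h x =>
            induction v using TensorProduct.induction_on with
            | zero => simp only [map_zero, TensorProduct.zero_tmul, TensorProduct.tmul_zero]
            | add x' y' hx hy =>
              simp only [map_add, TensorProduct.add_tmul, TensorProduct.tmul_add, hx, hy]
            | tmul h' x' => simp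
        have e : (a ⊗ₜ[k] b) * (a' ⊗ₜ[k] b') = (a * a') ⊗ₜ[k] (b * b') := by simp
        rw [e, dCoactL_tmul, hAcm, h1, dCoactL_tmul, dCoactL_tmul]
  · intro c d
    induction c using TensorProduct.induction_on with
    | zero => simp only [zero_mul, map_zero, TensorProduct.zero_tmul]
    | add x y hx hy => simp only [add_mul, map_add, TensorProduct.add_tmul, hx, hy]
    | tmul a b =>
      induction d using TensorProduct.induction_on with
      | zero => simp only [mul_zero, map_zero, TensorProduct.tmul_zero, map_zero]
      | add x y hx hy =>
        simp only [mul_add, map_add, TensorProduct.tmul_add, hx, hy]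
      | tmul a' b' =>
        have h1 : ∀ u v : B ⊗[k] H,
            TensorProduct.map (TensorProduct.mk k A B (a * a')) LinearMap.id
              (TensorProduct.map (μD k) (μH k H) (tt k B H B H (u ⊗ₜ v)))
            = TensorProduct.map (μD k) (μH k H)
                (tt k (A ⊗[k] B) H (A ⊗[k] B) H
                  ((TensorProduct.map (TensorProduct.mk k A B a) LinearMap.id u) ⊗ₜ
                    (TensorProduct.map (TensorProduct.mk k A B a') LinearMap.id v))) := by
          intro u v
          induction u using TensorProduct.induction_on with
          | zero => simp only [map_zero, TensorProduct.zero_tmul, TensorProduct.tmul_zero]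
          | add x y hx hy =>
            simp only [map_add, TensorProduct.add_tmul, TensorProduct.tmul_add, hx, hy]
          | tmul y g =>
            induction v using TensorProduct.induction_on with
            | zero => simp only [map_zero, TensorProduct.zero_tmul, TensorProduct.tmul_zero]
            | add x' y' hx hy =>
              simp only [map_add, TensorProduct.add_tmul, TensorProduct.tmul_add, hx, hy]
            | tmul y' g' => simp
        have e : (a ⊗ₜ[k] b) * (a' ⊗ₜ[k] b') = (a * a') ⊗ₜ[k] (b * b') := by simp
        rw [e, dCoactR_tmul, hBcm, h1, dCoactR_tmul, dCoactR_tmul]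

lemma aux_comulact
    (hAda : ∀ (h : H) (a : A), ΔA (aA (h ⊗ₜ a))
      = TensorProduct.map aA aA (tt k H H A A (δH k H h ⊗ₜ ΔA a)))
    (hBda : ∀ (b : B) (h : H), ΔB (aB (b ⊗ₜ h))
      = TensorProduct.map aB aB (tt k B B H H (ΔB b ⊗ₜ δH k H h))) :
    CondComulAct k H (dActL k H A B aA) (dActR k H A B aB) (dComul k A B ΔA ΔB) := by
  constructor
  · intro h d
    induction d using TensorProduct.induction_on with
    | zero => simp only [TensorProduct.tmul_zero, map_zero]
    | add x y hx hy => simp only [TensorProduct.tmul_add, map_add, hx, hy]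
    | tmul a b =>
      have h1 : ∀ (w : H ⊗[k] H) (u : A ⊗[k] A) (v : B ⊗[k] B),
          tt k A A B B ((TensorProduct.map aA aA (tt k H H A A (w ⊗ₜ u))) ⊗ₜ v)
          = TensorProduct.map (dActL k H A B aA) (dActL k H A B aA)
              (tt k H H (A ⊗[k] B) (A ⊗[k] B) (w ⊗ₜ tt k A A B B (u ⊗ₜ v))) := by
        intro w u v
        induction w using TensorProduct.induction_on with
        | zero => simp only [map_zero, TensorProduct.zero_tmul, TensorProduct.tmul_zero]
        | add x y hx hy =>
          simp only [map_add, TensorProduct.add_tmul, TensorProduct.tmul_add, hx, hy]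
        | tmul h1 h2 =>
          induction u using TensorProduct.induction_on with
          | zero => simp only [map_zero, TensorProduct.zero_tmul, TensorProduct.tmul_zero]
          | add x y hx hy =>
            simp only [map_add, TensorProduct.add_tmul, TensorProduct.tmul_add, hx, hy]
          | tmul a1 a2 =>
            induction v using TensorProduct.induction_on with
            | zero => simp only [map_zero, TensorProduct.zero_tmul, TensorProduct.tmul_zero]
            | add x' y' hx hy =>
              simp only [map_add, TensorProduct.add_tmul, TensorProduct.tmul_add, hx, hy]
            | tmul b1 b2 => simp
      have e1 : dActL k H A B aA (h ⊗ₜ (a ⊗ₜ b)) = aA (h ⊗ₜ a) ⊗ₜ b := by simp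
      have e2 : ∀ (x : A) (y : B), dComul k A B ΔA ΔB (x ⊗ₜ y)
          = tt k A A B B (ΔA x ⊗ₜ ΔB y) := by intro x y; simp [dComul]
      rw [e1, e2, e2, hAda, h1]
  · intro d h
    induction d using TensorProduct.induction_on with
    | zero => simp only [TensorProduct.zero_tmul, map_zero]
    | add x y hx hy => simp only [TensorProduct.add_tmul, map_add, hx, hy]
    | tmul a b =>
      have h1 : ∀ (u : A ⊗[k] A) (v : B ⊗[k] B) (w : H ⊗[k] H),
          tt k A A B B (u ⊗ₜ (TensorProduct.map aB aB (tt k B B H H (v ⊗ₜ w))))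
          = TensorProduct.map (dActR k H A B aB) (dActR k H A B aB)
              (tt k (A ⊗[k] B) (A ⊗[k] B) H H ((tt k A A B B (u ⊗ₜ v)) ⊗ₜ w)) := by
        intro u v w
        induction w using TensorProduct.induction_on with
        | zero => simp only [map_zero, TensorProduct.zero_tmul, TensorProduct.tmul_zero]
        | add x y hx hy =>
          simp only [map_add, TensorProduct.add_tmul, TensorProduct.tmul_add, hx, hy]
        | tmul h1 h2 =>
          induction u using TensorProduct.induction_on with
          | zero => simp only [map_zero, TensorProduct.zero_tmul, TensorProduct.tmul_zero]
          | add x y hx hy =>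
            simp only [map_add, TensorProduct.add_tmul, TensorProduct.tmul_add, hx, hy]
          | tmul a1 a2 =>
            induction v using TensorProduct.induction_on with
            | zero => simp only [map_zero, TensorProduct.zero_tmul, TensorProduct.tmul_zero]
            | add x' y' hx hy =>
              simp only [map_add, TensorProduct.add_tmul, TensorProduct.tmul_add, hx, hy]
            | tmul b1 b2 => simp
      have e1 : dActR k H A B aB ((a ⊗ₜ b) ⊗ₜ h) = a ⊗ₜ aB (b ⊗ₜ h) := by simp
      have e2 : ∀ (x : A) (y : B), dComul k A B ΔA ΔB (x ⊗ₜ y)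
          = tt k A A B B (ΔA x ⊗ₜ ΔB y) := by intro x y; simp [dComul]
      rw [e1, e2, e2, hBda, h1]

end

set_option synthInstance.maxHeartbeats 1000000
set_option maxHeartbeats 4000000

section
variable {k : Type*} [CommRing k] {H : Type*} [Ring H] [Bialgebra k H]
    {A B : Type*} [Ring A] [Algebra k A] [Ring B] [Algebra k B]
    (aA : H ⊗[k] A →ₗ[k] A) (cA : A →ₗ[k] H ⊗[k] A)
    (aB : B ⊗[k] H →ₗ[k] B) (cB : B →ₗ[k] B ⊗[k] H)

attribute [local simp] TensorProduct.mk_apply LinearMap.flip_apply dActL dActR tt asl asr sw μH δH εH μD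
  LinearMap.mul'_apply TensorProduct.tensorTensorTensorComm_tmul
  Algebra.TensorProduct.tmul_mul_tmul Algebra.TensorProduct.one_def
  TensorProduct.tmul_add TensorProduct.add_tmul TensorProduct.tmul_smul TensorProduct.smul_tmul'
  assoc_opaque assoc_symm_opaque tt_opaque_left tt_opaque_right dCoactL_tmul dCoactR_tmul

lemma aux_ydl (hAyd : CondYDl k H aA cA) :
    CondYDl k H (dActL k H A B aA) (dCoactL k H A B cA) := by
  intro h m
  induction m using TensorProduct.induction_on with
  | zero => simp only [TensorProduct.tmul_zero, map_zero]
  | add x y hx hy => simp only [TensorProduct.tmul_add, map_add, hx, hy]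
  | tmul a b =>
    have h1 : ∀ w : H ⊗[k] H,
        ydlL k H (dActL k H A B aA) (dCoactL k H A B cA) (w ⊗ₜ (a ⊗ₜ b))
        = TensorProduct.map LinearMap.id ((TensorProduct.mk k A B).flip b)
            (ydlL k H aA cA (w ⊗ₜ a)) := by
      intro w
      induction w using TensorProduct.induction_on with
      | zero => simp only [map_zero, TensorProduct.zero_tmul]
      | add x y hx hy => simp only [map_add, TensorProduct.add_tmul, hx, hy]
      | tmul h1 h2 =>
        simp only [ydlL, LinearMap.comp_apply, LinearEquiv.coe_coe, TensorProduct.map_tmul,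
          TensorProduct.comm_tmul, sw, asl, asr, TensorProduct.assoc_tmul,
          LinearMap.id_coe, id_eq, assoc_symm_opaque, assoc_opaque, TensorProduct.mk_apply, LinearMap.flip_apply]
        have e1 : dActL k H A B aA (h1 ⊗ₜ (a ⊗ₜ b)) = aA (h1 ⊗ₜ a) ⊗ₜ b := by simp
        rw [e1, dCoactL_tmul]
        generalize cA (aA (h1 ⊗ₜ a)) = u
        induction u using TensorProduct.induction_on with
        | zero => simp only [map_zero, TensorProduct.zero_tmul, TensorProduct.tmul_zero]
        | add x y hx hy =>
          simp only [map_add, TensorProduct.add_tmul, TensorProduct.tmul_add, hx, hy]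
        | tmul g x => simp
    have h2 : ∀ w : H ⊗[k] H,
        ydlR k H (dActL k H A B aA) (dCoactL k H A B cA) (w ⊗ₜ (a ⊗ₜ b))
        = TensorProduct.map LinearMap.id ((TensorProduct.mk k A B).flip b)
            (ydlR k H aA cA (w ⊗ₜ a)) := by
      intro w
      induction w using TensorProduct.induction_on with
      | zero => simp only [map_zero, TensorProduct.zero_tmul]
      | add x y hx hy => simp only [map_add, TensorProduct.add_tmul, hx, hy]
      | tmul h1 h2 =>
        simp only [ydlR, LinearMap.comp_apply, LinearEquiv.coe_coe, TensorProduct.map_tmul,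
          LinearMap.id_coe, id_eq, dCoactL_tmul, tt_opaque_right]
        generalize cA a = u
        induction u using TensorProduct.induction_on with
        | zero => simp only [map_zero, TensorProduct.zero_tmul, TensorProduct.tmul_zero]
        | add x y hx hy =>
          simp only [map_add, TensorProduct.add_tmul, TensorProduct.tmul_add, hx, hy]
        | tmul g x => simp
    rw [h1, h2, hAyd h a]

lemma aux_ydr (hByd : CondYDr k H aB cB) :
    CondYDr k H (dActR k H A B aB) (dCoactR k H A B cB) := by
  intro h m
  induction m using TensorProduct.induction_on with
  | zero => simp only [TensorProduct.zero_tmul, map_zero]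
  | add x y hx hy => simp only [TensorProduct.add_tmul, map_add, hx, hy]
  | tmul a b =>
    have h1 : ∀ w : H ⊗[k] H,
        ydrL k H (dActR k H A B aB) (dCoactR k H A B cB) ((a ⊗ₜ b) ⊗ₜ w)
        = TensorProduct.map (TensorProduct.mk k A B a) LinearMap.id
            (ydrL k H aB cB (b ⊗ₜ w)) := by
      intro w
      induction w using TensorProduct.induction_on with
      | zero => simp only [map_zero, TensorProduct.tmul_zero]
      | add x y hx hy => simp only [map_add, TensorProduct.tmul_add, hx, hy]
      | tmul h1 h2 =>
        simp only [ydrL, LinearMap.comp_apply, LinearEquiv.coe_coe, TensorProduct.map_tmul,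
          TensorProduct.comm_tmul, sw, asl, asr, TensorProduct.assoc_symm_tmul,
          LinearMap.id_coe, id_eq, assoc_symm_opaque, assoc_opaque, TensorProduct.mk_apply, LinearMap.flip_apply]
        have e1 : dActR k H A B aB ((a ⊗ₜ b) ⊗ₜ h2) = a ⊗ₜ aB (b ⊗ₜ h2) := by simp
        rw [e1, dCoactR_tmul]
        generalize cB (aB (b ⊗ₜ h2)) = u
        induction u using TensorProduct.induction_on with
        | zero => simp only [map_zero, TensorProduct.zero_tmul, TensorProduct.tmul_zero]
        | add x y hx hy =>
          simp only [map_add, TensorProduct.add_tmul, TensorProduct.tmul_add, hx, hy]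
        | tmul y g => simp
    have h2 : ∀ w : H ⊗[k] H,
        ydrR k H (dActR k H A B aB) (dCoactR k H A B cB) ((a ⊗ₜ b) ⊗ₜ w)
        = TensorProduct.map (TensorProduct.mk k A B a) LinearMap.id
            (ydrR k H aB cB (b ⊗ₜ w)) := by
      intro w
      induction w using TensorProduct.induction_on with
      | zero => simp only [map_zero, TensorProduct.tmul_zero]
      | add x y hx hy => simp only [map_add, TensorProduct.tmul_add, hx, hy]
      | tmul h1 h2 =>
        simp only [ydrR, LinearMap.comp_apply, LinearEquiv.coe_coe, TensorProduct.map_tmul,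
          LinearMap.id_coe, id_eq, dCoactR_tmul, tt_opaque_left]
        generalize cB b = u
        induction u using TensorProduct.induction_on with
        | zero => simp only [map_zero, TensorProduct.zero_tmul, TensorProduct.tmul_zero]
        | add x y hx hy =>
          simp only [map_add, TensorProduct.add_tmul, TensorProduct.tmul_add, hx, hy]
        | tmul y g => simp
    rw [h1, h2, hByd h b]

lemma aux_114 (hpair : PairingTrivial k H A B aA cA aB cB) :
    Cond114 k H (dActL k H A B aA) (dActR k H A B aB)
      (dCoactL k H A B cA) (dCoactR k H A B cB) := by
  intro c d
  induction c using TensorProduct.induction_on with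
  | zero => simp only [map_zero, TensorProduct.zero_tmul]
  | add x y hx hy => simp only [map_add, TensorProduct.add_tmul, hx, hy]
  | tmul a b =>
    induction d using TensorProduct.induction_on with
    | zero => simp only [map_zero, TensorProduct.tmul_zero]
    | add x y hx hy => simp only [map_add, TensorProduct.tmul_add, hx, hy]
    | tmul a' b' =>
      have h1 : ∀ (v : B ⊗[k] H) (u : H ⊗[k] A),
          TensorProduct.map (dActR k H A B aB) (dActL k H A B aA)
            (tt k (A ⊗[k] B) H H (A ⊗[k] B)
              ((TensorProduct.map (TensorProduct.mk k A B a) LinearMap.id v) ⊗ₜ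
                (TensorProduct.map LinearMap.id ((TensorProduct.mk k A B).flip b') u)))
          = sw k (A ⊗[k] B) (A ⊗[k] B)
              (TensorProduct.map ((TensorProduct.mk k A B).flip b') (TensorProduct.mk k A B a)
                (sw k B A (TensorProduct.map aB aA (tt k B H H A (v ⊗ₜ u))))) := by
        intro v u
        induction v using TensorProduct.induction_on with
        | zero => simp only [map_zero, TensorProduct.zero_tmul, TensorProduct.tmul_zero]
        | add x y hx hy =>
          simp only [map_add, TensorProduct.add_tmul, TensorProduct.tmul_add, hx, hy]
        | tmul y g =>
          induction u using TensorProduct.induction_on with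
          | zero => simp only [map_zero, TensorProduct.zero_tmul, TensorProduct.tmul_zero]
          | add x' y' hx hy =>
            simp only [map_add, TensorProduct.add_tmul, TensorProduct.tmul_add, hx, hy]
          | tmul g' x => simp
      rw [dCoactL_tmul, dCoactR_tmul, h1, hpair a' b]
      simp
end

set_option synthInstance.maxHeartbeats 1000000
set_option maxHeartbeats 4000000

section
variable {k : Type*} [CommRing k]

lemma middle_tmul {A B C E B' C' : Type*} [AddCommGroup A] [Module k A] [AddCommGroup B]
    [Module k B] [AddCommGroup C] [Module k C] [AddCommGroup E] [Module k E]
    [AddCommGroup B'] [Module k B'] [AddCommGroup C'] [Module k C']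
    (f : B ⊗[k] C →ₗ[k] B' ⊗[k] C') (a : A) (b : B) (c : C) (e : E) :
    middle k f ((a ⊗ₜ b) ⊗ₜ (c ⊗ₜ e))
      = TensorProduct.map LinearMap.id ((TensorProduct.mk k C' E).flip e)
          (TensorProduct.map (TensorProduct.mk k A B' a) LinearMap.id (f (b ⊗ₜ c))) := by
  simp [middle, asl, asr, assoc_opaque, assoc_symm_opaque]

end

section
variable {k : Type*} [CommRing k] {H : Type*} [Ring H] [Bialgebra k H]
    {A B : Type*} [Ring A] [Algebra k A] [Ring B] [Algebra k B]
    (aA : H ⊗[k] A →ₗ[k] A) (cA : A →ₗ[k] H ⊗[k] A)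
    (ΔA : A →ₗ[k] A ⊗[k] A)
    (aB : B ⊗[k] H →ₗ[k] B) (cB : B →ₗ[k] B ⊗[k] H)
    (ΔB : B →ₗ[k] B ⊗[k] B)

attribute [local simp] TensorProduct.mk_apply LinearMap.flip_apply dActL dActR tt asl asr sw
  μH δH εH μD LinearMap.mul'_apply TensorProduct.tensorTensorTensorComm_tmul
  Algebra.TensorProduct.tmul_mul_tmul Algebra.TensorProduct.one_def
  TensorProduct.tmul_add TensorProduct.add_tmul
  assoc_opaque assoc_symm_opaque tt_opaque_left tt_opaque_right dCoactL_tmul dCoactR_tmul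

lemma braid_tmul (x y : A) (p q : B) :
    braid k H (dCoactL k H A B cA) (dActR k H A B aB) (dActL k H A B aA) (dCoactR k H A B cB)
      ((x ⊗ₜ p) ⊗ₜ (y ⊗ₜ q))
    = tt k A A B B
        ((braidYDl k H A cA aA (x ⊗ₜ y)) ⊗ₜ (braidYDr k H B cB aB (p ⊗ₜ q))) := by
  simp only [braid, braidYDl, braidYDr, LinearMap.comp_apply, LinearEquiv.coe_coe,
    TensorProduct.map_tmul, LinearMap.id_coe, id_eq, dCoactL_tmul, dCoactR_tmul,
    asl, asr, sw, TensorProduct.comm_tmul, assoc_opaque, assoc_symm_opaque,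
    TensorProduct.mk_apply, LinearMap.flip_apply]
  generalize cA x = u
  induction u using TensorProduct.induction_on with
  | zero => simp only [map_zero, TensorProduct.zero_tmul, TensorProduct.tmul_zero]
  | add x1 y1 hx hy =>
    simp only [map_add, TensorProduct.add_tmul, TensorProduct.tmul_add, hx, hy]
  | tmul h x' =>
    generalize cB q = v
    induction v using TensorProduct.induction_on with
    | zero => simp only [map_zero, TensorProduct.zero_tmul, TensorProduct.tmul_zero]
    | add x1 y1 hx hy =>
      simp only [map_add, TensorProduct.add_tmul, TensorProduct.tmul_add, hx, hy]
    | tmul q1 g => simp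

lemma aux_braidmul
    (hAdm : ∀ a a' : A, ΔA (a * a')
      = TensorProduct.map (μD k) (μD k)
          (middle k (braidYDl k H A cA aA) (ΔA a ⊗ₜ ΔA a')))
    (hBdm : ∀ b b' : B, ΔB (b * b')
      = TensorProduct.map (μD k) (μD k)
          (middle k (braidYDr k H B cB aB) (ΔB b ⊗ₜ ΔB b'))) :
    CondBraidMul k H (dActL k H A B aA) (dActR k H A B aB)
      (dCoactL k H A B cA) (dCoactR k H A B cB) (dComul k A B ΔA ΔB) := by
  intro c d
  induction c using TensorProduct.induction_on with
  | zero => simp only [zero_mul, map_zero, TensorProduct.zero_tmul]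
  | add x y hx hy => simp only [add_mul, map_add, TensorProduct.add_tmul, hx, hy]
  | tmul a b =>
    induction d using TensorProduct.induction_on with
    | zero => simp only [mul_zero, map_zero, TensorProduct.tmul_zero]
    | add x y hx hy => simp only [mul_add, map_add, TensorProduct.tmul_add, hx, hy]
    | tmul a' b' =>
      have key : ∀ (u u' : A ⊗[k] A) (v v' : B ⊗[k] B),
          tt k A A B B
            ((TensorProduct.map (μD k) (μD k) (middle k (braidYDl k H A cA aA) (u ⊗ₜ u'))) ⊗ₜ
              (TensorProduct.map (μD k) (μD k) (middle k (braidYDr k H B cB aB) (v ⊗ₜ v'))))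
          = TensorProduct.map (μD k) (μD k)
              (middle k (braid k H (dCoactL k H A B cA) (dActR k H A B aB)
                  (dActL k H A B aA) (dCoactR k H A B cB))
                ((tt k A A B B (u ⊗ₜ v)) ⊗ₜ (tt k A A B B (u' ⊗ₜ v')))) := by
        intro u u' v v'
        induction u using TensorProduct.induction_on with
        | zero => simp only [map_zero, TensorProduct.zero_tmul, TensorProduct.tmul_zero]
        | add x y hx hy =>
          simp only [map_add, TensorProduct.add_tmul, TensorProduct.tmul_add, hx, hy]
        | tmul a1 a2 =>
          induction u' using TensorProduct.induction_on with
          | zero => simp only [map_zero, TensorProduct.zero_tmul, TensorProduct.tmul_zero]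
          | add x y hx hy =>
            simp only [map_add, TensorProduct.add_tmul, TensorProduct.tmul_add, hx, hy]
          | tmul a1' a2' =>
            induction v using TensorProduct.induction_on with
            | zero => simp only [map_zero, TensorProduct.zero_tmul, TensorProduct.tmul_zero]
            | add x y hx hy =>
              simp only [map_add, TensorProduct.add_tmul, TensorProduct.tmul_add, hx, hy]
            | tmul b1 b2 =>
              induction v' using TensorProduct.induction_on with
              | zero => simp only [map_zero, TensorProduct.zero_tmul, TensorProduct.tmul_zero]
              | add x y hx hy =>
                simp only [map_add, TensorProduct.add_tmul, TensorProduct.tmul_add, hx, hy]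
              | tmul b1' b2' =>
                have ett : ∀ (x1 x2 : A) (y1 y2 : B),
                    tt k A A B B ((x1 ⊗ₜ x2) ⊗ₜ (y1 ⊗ₜ y2))
                      = (x1 ⊗ₜ y1) ⊗ₜ (x2 ⊗ₜ y2) := by intro _ _ _ _; simp [tt]
                rw [ett, ett, middle_tmul, middle_tmul, middle_tmul, braid_tmul]
                generalize braidYDl k H A cA aA (a2 ⊗ₜ a1') = P
                induction P using TensorProduct.induction_on with
                | zero => simp only [map_zero, TensorProduct.zero_tmul, TensorProduct.tmul_zero]
                | add x y hx hy =>
                  simp only [map_add, TensorProduct.add_tmul, TensorProduct.tmul_add, hx, hy]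
                | tmul xa ya =>
                  generalize braidYDr k H B cB aB (b2 ⊗ₜ b1') = Q
                  induction Q using TensorProduct.induction_on with
                  | zero =>
                    simp only [map_zero, TensorProduct.zero_tmul, TensorProduct.tmul_zero]
                  | add x y hx hy =>
                    simp only [map_add, TensorProduct.add_tmul, TensorProduct.tmul_add, hx, hy]
                  | tmul pb qb => simp
      have e : ∀ (x : A) (y : B), dComul k A B ΔA ΔB (x ⊗ₜ y)
          = tt k A A B B (ΔA x ⊗ₜ ΔB y) := by intro x y; simp [dComul]
      have em : (a ⊗ₜ[k] b) * (a' ⊗ₜ[k] b') = (a * a') ⊗ₜ[k] (b * b') := by simp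
      rw [em, e, e, e, hAdm, hBdm, key]
end

/-- `D = A ⊗ B` with the induced structures gives an L-R-admissible pair. -/
theorem tensor_of_yd_bialgebras_lr_admissible
    {k : Type*} [CommRing k] {H : Type*} [Ring H] [Bialgebra k H]
    {A B : Type*} [Ring A] [Algebra k A] [Ring B] [Algebra k B]
    (aA : H ⊗[k] A →ₗ[k] A) (cA : A →ₗ[k] H ⊗[k] A)
    (ΔA : A →ₗ[k] A ⊗[k] A) (εA : A →ₗ[k] k)
    (aB : B ⊗[k] H →ₗ[k] B) (cB : B →ₗ[k] B ⊗[k] H)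
    (ΔB : B →ₗ[k] B ⊗[k] B) (εB : B →ₗ[k] k)
    (hA : YDlBialgebra k H A aA cA ΔA εA)
    (hB : YDrBialgebra k H B aB cB ΔB εB)
    (hpair : PairingTrivial k H A B aA cA aB cB) :
    LRAdmissible k H (dActL k H A B aA) (dActR k H A B aB)
      (dCoactL k H A B cA) (dCoactR k H A B cB)
      (dComul k A B ΔA ΔB) (dCounit k A B εA εB) := by
  obtain ⟨hAm, hAcom, hAyd, hAalg, hAcm, hAc1, hAcoalg, hAeps, hAepsAct, hAd1, hAdAct,
    hAlcc, hAdm⟩ := hA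
  obtain ⟨hBm, hBcom, hByd, hBalg, hBcm, hBc1, hBcoalg, hBeps, hBepsAct, hBd1, hBdAct,
    hBlcc, hBdm⟩ := hB
  refine ⟨?_, ?_, ?_, ?_, ?_, ?_, ?_, ?_, ?_, ?_, ?_, ?_, ?_, ?_, ?_, ?_, ?_, ?_⟩
  · exact aux_bimod _ _ hAm hBm
  · exact aux_lma _ hAalg
  · exact aux_rma _ hBalg
  · exact aux_bicomod _ _ hAcom hBcom
  · exact aux_coalg _ _ _ _ hAcoalg hBcoalg
  · exact aux_lcomodcoalg _ _ _ _ _ hAlcc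
  · exact aux_rcomodcoalg _ _ _ _ _ hBlcc
  · exact aux_counitalg _ _ hAeps hBeps
  · exact aux_counitacts _ _ _ _ hAepsAct hBepsAct
  · exact aux_units _ _ _ _ hAc1 hBc1 hAd1 hBd1
  · exact aux_coactmul _ _ hAcm hBcm
  · exact aux_comulact _ _ _ _ hAdAct hBdAct
  · exact aux_braidmul _ _ _ _ _ _ hAdm hBdm
  · exact aux_ydl _ _ hAyd
  · exact aux_longLR _ _
  · exact aux_ydr _ _ hByd
  · exact aux_longRL _ _
  · exact aux_114 _ _ _ _ hpair

end LRPaper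
end
end

section
/- With H, A, B, D as above (double biproduct with trivial pairing, D = A ⊗ B with the induced L-R-admissible structure), the map φ: (A ⊗ B) ♮ H → A # H # B, (a ⊗ b) ♮ h ↦ a # h # b, is an isomorphism of bialgebras between the L-R-smash biproduct and the double biproduct. -/
open TensorProduct
noncomputable section
namespace LRPaper
set_option maxHeartbeats 2000000
set_option synthInstance.maxHeartbeats 400000

section AuxLemmas
variable {k : Type*} [CommRing k] {H : Type*} [Ring H] [Bialgebra k H]
variable {A B : Type*} [Ring A] [Algebra k A] [Ring B] [Algebra k B]

lemma mul_key (aA : H ⊗[k] A →ₗ[k] A) (aB : B ⊗[k] H →ₗ[k] B)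
    (a a' : A) (h h' : H) (b b' : B) :
    phiAB k H A B
        (smashMulExpr k H (dActL k H A B aA) (dActR k H A B aB) (a ⊗ₜ b) h (a' ⊗ₜ b') h')
      = dblMulExpr k H A B aA aB a h b a' h' b' := by
  simp only [smashMulExpr, Xel, Yel, dblMulExpr, P1, P2, combineAHB]
  induction δH k H h using TensorProduct.induction_on with
  | zero => simp
  | add x y ihx ihy =>
      simp only [map_add, TensorProduct.add_tmul, TensorProduct.tmul_add] at ihx ihy ⊢
      rw [ihx, ihy]
  | tmul u1 u2 =>
    induction δH k H h' using TensorProduct.induction_on with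
    | zero => simp
    | add x y ihx ihy =>
        simp only [map_add, TensorProduct.add_tmul, TensorProduct.tmul_add] at ihx ihy ⊢
        rw [ihx, ihy]
    | tmul v1 v2 =>
        simp [tt, asl, asr, sw, μD, μH, dActL, dActR, phiAB,
          TensorProduct.assoc_tmul, TensorProduct.assoc_symm_tmul,
          TensorProduct.comm_tmul, TensorProduct.tensorTensorTensorComm_tmul,
          LinearMap.mul'_apply, Algebra.TensorProduct.tmul_mul_tmul,
          TensorProduct.lid_tmul, TensorProduct.rid_tmul]

lemma comul_key (cA : A →ₗ[k] H ⊗[k] A) (cB : B →ₗ[k] B ⊗[k] H)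
    (ΔA : A →ₗ[k] A ⊗[k] A) (ΔB : B →ₗ[k] B ⊗[k] B)
    (a : A) (h : H) (b : B) :
    TensorProduct.map (phiAB k H A B) (phiAB k H A B)
        (Wmap k H (dCoactL k H A B cA) (dCoactR k H A B cB)
          (dComul k A B ΔA ΔB (a ⊗ₜ b) ⊗ₜ δH k H h))
      = Wd k H A B cA cB ((ΔA a ⊗ₜ δH k H h) ⊗ₜ ΔB b) := by
  simp only [dComul, LinearMap.coe_comp, Function.comp_apply, TensorProduct.map_tmul]
  induction ΔA a using TensorProduct.induction_on with
  | zero => simp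
  | add x y ihx ihy =>
      simp only [map_add, TensorProduct.add_tmul, TensorProduct.tmul_add] at ihx ihy ⊢
      rw [ihx, ihy]
  | tmul a1 a2 =>
  induction ΔB b using TensorProduct.induction_on with
  | zero => simp
  | add x y ihx ihy =>
      simp only [map_add, TensorProduct.add_tmul, TensorProduct.tmul_add] at ihx ihy ⊢
      rw [ihx, ihy]
  | tmul b1 b2 =>
  induction δH k H h using TensorProduct.induction_on with
  | zero => simp
  | add x y ihx ihy =>
      simp only [map_add, TensorProduct.add_tmul, TensorProduct.tmul_add] at ihx ihy ⊢
      rw [ihx, ihy]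
  | tmul h1 h2 =>
  simp only [Wmap, Wd, dCoactL, dCoactR, tt, asl, asr, sw,
    LinearMap.coe_comp, Function.comp_apply, LinearEquiv.coe_coe,
    TensorProduct.map_tmul, TensorProduct.assoc_tmul, TensorProduct.assoc_symm_tmul,
    TensorProduct.comm_tmul, TensorProduct.tensorTensorTensorComm_tmul,
    LinearMap.id_coe, id_eq]
  induction cA a2 using TensorProduct.induction_on with
  | zero => simp
  | add x y ihx ihy =>
      simp only [map_add, TensorProduct.add_tmul, TensorProduct.tmul_add] at ihx ihy ⊢
      rw [ihx, ihy]
  | tmul ha a2' =>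
  induction cB b1 using TensorProduct.induction_on with
  | zero => simp
  | add x y ihx ihy =>
      simp only [map_add, TensorProduct.add_tmul, TensorProduct.tmul_add] at ihx ihy ⊢
      rw [ihx, ihy]
  | tmul b1' hb =>
  simp [tt, asl, asr, sw, μD, μH, phiAB,
    TensorProduct.assoc_tmul, TensorProduct.assoc_symm_tmul,
    TensorProduct.comm_tmul, TensorProduct.tensorTensorTensorComm_tmul,
    LinearMap.mul'_apply, TensorProduct.lid_tmul, TensorProduct.rid_tmul]

/-- the inverse of `phiAB` -/
def psiAB : (A ⊗[k] H) ⊗[k] B →ₗ[k] (A ⊗[k] B) ⊗[k] H :=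
  asr k A B H ∘ₗ TensorProduct.map LinearMap.id (sw k H B) ∘ₗ asl k A H B

lemma psi_phi (x : (A ⊗[k] B) ⊗[k] H) : psiAB (phiAB k H A B x) = x := by
  induction x using TensorProduct.induction_on with
  | zero => simp
  | add x y ihx ihy => rw [map_add, map_add, ihx, ihy]
  | tmul d h =>
    induction d using TensorProduct.induction_on with
    | zero => simp
    | add x y ihx ihy =>
        simp only [TensorProduct.add_tmul, map_add] at ihx ihy ⊢
        rw [ihx, ihy]
    | tmul a b =>
        simp [phiAB, psiAB, asl, asr, sw, TensorProduct.assoc_tmul,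
          TensorProduct.assoc_symm_tmul, TensorProduct.comm_tmul]

lemma phi_psi (x : (A ⊗[k] H) ⊗[k] B) : phiAB k H A B (psiAB x) = x := by
  induction x using TensorProduct.induction_on with
  | zero => simp
  | add x y ihx ihy => rw [map_add, map_add, ihx, ihy]
  | tmul d b =>
    induction d using TensorProduct.induction_on with
    | zero => simp
    | add x y ihx ihy =>
        simp only [TensorProduct.add_tmul, map_add] at ihx ihy ⊢
        rw [ihx, ihy]
    | tmul a h =>
        simp [phiAB, psiAB, asl, asr, sw, TensorProduct.assoc_tmul,
          TensorProduct.assoc_symm_tmul, TensorProduct.comm_tmul]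

end AuxLemmas
/-- `φ : (A ⊗ B) ♮ H → A # H # B` is an isomorphism of bialgebras. -/
theorem phi_bialgebra_iso
    {k : Type*} [CommRing k] {H : Type*} [Ring H] [Bialgebra k H]
    {A B : Type*} [Ring A] [Algebra k A] [Ring B] [Algebra k B]
    (aA : H ⊗[k] A →ₗ[k] A) (cA : A →ₗ[k] H ⊗[k] A)
    (ΔA : A →ₗ[k] A ⊗[k] A) (εA : A →ₗ[k] k)
    (aB : B ⊗[k] H →ₗ[k] B) (cB : B →ₗ[k] B ⊗[k] H)
    (ΔB : B →ₗ[k] B ⊗[k] B) (εB : B →ₗ[k] k)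
    (hA : YDlBialgebra k H A aA cA ΔA εA)
    (hB : YDrBialgebra k H B aB cB ΔB εB)
    (hpair : PairingTrivial k H A B aA cA aB cB)
    -- the L-R-smash biproduct structure on (A ⊗ B) ♮ H
    (μLR : ((A ⊗[k] B) ⊗[k] H) ⊗[k] ((A ⊗[k] B) ⊗[k] H) →ₗ[k] (A ⊗[k] B) ⊗[k] H)
    (hμLR : ∀ (d : A ⊗[k] B) (h : H) (d' : A ⊗[k] B) (h' : H),
      μLR ((d ⊗ₜ h) ⊗ₜ (d' ⊗ₜ h'))
        = smashMulExpr k H (dActL k H A B aA) (dActR k H A B aB) d h d' h')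
    (ΔLR : (A ⊗[k] B) ⊗[k] H →ₗ[k] ((A ⊗[k] B) ⊗[k] H) ⊗[k] ((A ⊗[k] B) ⊗[k] H))
    (hΔLR : ∀ (d : A ⊗[k] B) (h : H),
      ΔLR (d ⊗ₜ h)
        = Wmap k H (dCoactL k H A B cA) (dCoactR k H A B cB)
            (dComul k A B ΔA ΔB d ⊗ₜ δH k H h))
    -- the double biproduct structure on A # H # B
    (μd : ((A ⊗[k] H) ⊗[k] B) ⊗[k] ((A ⊗[k] H) ⊗[k] B) →ₗ[k] (A ⊗[k] H) ⊗[k] B)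
    (hμd : ∀ (a : A) (h : H) (b : B) (a' : A) (h' : H) (b' : B),
      μd (((a ⊗ₜ h) ⊗ₜ b) ⊗ₜ ((a' ⊗ₜ h') ⊗ₜ b'))
        = dblMulExpr k H A B aA aB a h b a' h' b')
    (Δdbl : (A ⊗[k] H) ⊗[k] B →ₗ[k] ((A ⊗[k] H) ⊗[k] B) ⊗[k] ((A ⊗[k] H) ⊗[k] B))
    (hΔd : ∀ (a : A) (h : H) (b : B),
      Δdbl ((a ⊗ₜ h) ⊗ₜ b) = Wd k H A B cA cB ((ΔA a ⊗ₜ δH k H h) ⊗ₜ ΔB b)) :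
    Function.Bijective (phiAB k H A B) ∧
    (∀ x y : (A ⊗[k] B) ⊗[k] H,
      phiAB k H A B (μLR (x ⊗ₜ y)) = μd (phiAB k H A B x ⊗ₜ phiAB k H A B y)) ∧
    (phiAB k H A B (((1 : A) ⊗ₜ (1 : B)) ⊗ₜ (1 : H))
      = ((1 : A) ⊗ₜ (1 : H)) ⊗ₜ (1 : B)) ∧
    (∀ x : (A ⊗[k] B) ⊗[k] H,
      TensorProduct.map (phiAB k H A B) (phiAB k H A B) (ΔLR x)
        = Δdbl (phiAB k H A B x)) ∧
    (∀ x : (A ⊗[k] B) ⊗[k] H,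
      smashCounit k H (dCounit k A B εA εB) x = dblCounit k H A B εA εB (phiAB k H A B x)) := by
  refine ⟨Function.bijective_iff_has_inverse.mpr ⟨psiAB, psi_phi, phi_psi⟩, ?_, ?_, ?_, ?_⟩
  · intro x y
    induction x using TensorProduct.induction_on with
    | zero => simp
    | add x1 x2 ih1 ih2 =>
        simp only [TensorProduct.add_tmul, map_add] at ih1 ih2 ⊢
        rw [ih1, ih2]
    | tmul d h =>
      induction y using TensorProduct.induction_on with
      | zero => simp
      | add y1 y2 ih1 ih2 =>
          simp only [TensorProduct.tmul_add, map_add] at ih1 ih2 ⊢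
          rw [ih1, ih2]
      | tmul d' h' =>
        rw [hμLR]
        induction d using TensorProduct.induction_on with
        | zero => simp [smashMulExpr, Xel]
        | add x1 x2 ih1 ih2 =>
            simp only [smashMulExpr, Xel, map_add, TensorProduct.add_tmul,
              TensorProduct.tmul_add] at ih1 ih2 ⊢
            rw [ih1, ih2]
        | tmul a b =>
          induction d' using TensorProduct.induction_on with
          | zero => simp [smashMulExpr, Xel, Yel]
          | add y1 y2 ih1 ih2 =>
              simp only [smashMulExpr, Xel, Yel, map_add, TensorProduct.add_tmul,
                TensorProduct.tmul_add] at ih1 ih2 ⊢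
              rw [ih1, ih2]
          | tmul a' b' =>
            have e1 : phiAB k H A B ((a ⊗ₜ[k] b) ⊗ₜ[k] h) = (a ⊗ₜ[k] h) ⊗ₜ[k] b := by
              simp [phiAB, asl, asr, sw, TensorProduct.assoc_tmul,
                TensorProduct.assoc_symm_tmul, TensorProduct.comm_tmul]
            have e2 : phiAB k H A B ((a' ⊗ₜ[k] b') ⊗ₜ[k] h') = (a' ⊗ₜ[k] h') ⊗ₜ[k] b' := by
              simp [phiAB, asl, asr, sw, TensorProduct.assoc_tmul,
                TensorProduct.assoc_symm_tmul, TensorProduct.comm_tmul]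
            rw [e1, e2, hμd]
            exact mul_key aA aB a a' h h' b b'
  · simp [phiAB, asl, asr, sw, TensorProduct.assoc_tmul,
      TensorProduct.assoc_symm_tmul, TensorProduct.comm_tmul]
  · intro x
    induction x using TensorProduct.induction_on with
    | zero => simp
    | add x1 x2 ih1 ih2 =>
        simp only [map_add] at ih1 ih2 ⊢
        rw [ih1, ih2]
    | tmul d h =>
      rw [hΔLR]
      induction d using TensorProduct.induction_on with
      | zero => simp
      | add x1 x2 ih1 ih2 =>
          simp only [map_add, TensorProduct.add_tmul, TensorProduct.tmul_add] at ih1 ih2 ⊢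
          rw [ih1, ih2]
      | tmul a b =>
        have e1 : phiAB k H A B ((a ⊗ₜ[k] b) ⊗ₜ[k] h) = (a ⊗ₜ[k] h) ⊗ₜ[k] b := by
          simp [phiAB, asl, asr, sw, TensorProduct.assoc_tmul,
            TensorProduct.assoc_symm_tmul, TensorProduct.comm_tmul]
        rw [e1, hΔd]
        exact comul_key cA cB ΔA ΔB a h b
  · intro x
    induction x using TensorProduct.induction_on with
    | zero => simp
    | add x1 x2 ih1 ih2 =>
        simp only [map_add] at ih1 ih2 ⊢
        rw [ih1, ih2]
    | tmul d h =>
      induction d using TensorProduct.induction_on with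
      | zero => simp
      | add x1 x2 ih1 ih2 =>
          simp only [map_add, TensorProduct.add_tmul] at ih1 ih2 ⊢
          rw [ih1, ih2]
      | tmul a b =>
          simp [smashCounit, dCounit, dblCounit, phiAB, εH, asl, asr, sw,
            TensorProduct.assoc_tmul, TensorProduct.assoc_symm_tmul,
            TensorProduct.comm_tmul, LinearMap.mul'_apply]
          ring

end LRPaper
end
end
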